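/- arXiv:2107.00874 — 11 statements merged into one kernel-verified Lean document; each statement's English description precedes it below -/
import Mathlib

section
/- For any integers d ≥ 0 and h ≥ 1 there exists an integer c = c(d,h) such that for every graph H on h vertices and every d-degenerate graph G, the number of injective homomorphisms from H to G is at most c·|V(G)|^{α_d(H)}, where α_d(H) is the maximum size of a set of pairwise non-adjacent vertices of degree at most d in H. -/
/-- A graph is `d`-degenerate if every (induced) subgraph on a nonempty vertex set has a
vertex with at most `d` neighbors inside that set. -/
def Degenerate {V : Type} (d : ℕ) (G : SimpleGraph V) : Prop :=
  ∀ s : Set V, s.Nonempty → ∃ v ∈ s, (G.neighborSet v ∩ s).ncard ≤ d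

/-- `α_d(H)`: the maximum size of a set of pairwise non-adjacent vertices of degree at
most `d` in `H`. -/
noncomputable def alphaD {V : Type} (d : ℕ) (H : SimpleGraph V) : ℕ :=
  sSup {n | ∃ s : Set V, s.Pairwise (fun u v => ¬ H.Adj u v) ∧
      (∀ v ∈ s, (H.neighborSet v).ncard ≤ d) ∧ s.ncard = n}

lemma exists_order {W : Type} [Fintype W] {d : ℕ} {G : SimpleGraph W}
    (hG : Degenerate d G) :
    ∃ r : W → ℕ, Function.Injective r ∧
      ∀ v, (G.neighborSet v ∩ {w | r w < r v}).ncard ≤ d := by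
  classical
  have main : ∀ s : Finset W, ∃ r : W → ℕ, Set.InjOn r ↑s ∧
      ∀ v ∈ s, (G.neighborSet v ∩ {w | w ∈ s ∧ r w < r v}).ncard ≤ d := by
    intro s
    induction s using Finset.strongInduction with
    | _ s ih =>
      rcases s.eq_empty_or_nonempty with rfl | hs
      · exact ⟨fun _ => 0, by simp, by simp⟩
      · obtain ⟨v, hv, hvd⟩ := hG ↑s (by exact_mod_cast hs.to_set)
        have hv' : v ∈ s := by exact_mod_cast hv
        obtain ⟨r, hrinj, hrd⟩ := ih (s.erase v) (Finset.erase_ssubset hv')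
        set M := (s.erase v).sup r with hM
        refine ⟨fun w => if w = v then M + 1 else r w, ?_, ?_⟩
        · intro a ha b hb hab
          simp only at hab
          by_cases hav : a = v <;> by_cases hbv : b = v
          · rw [hav, hbv]
          · rw [if_pos hav, if_neg hbv] at hab
            have : r b ≤ M := Finset.le_sup (Finset.mem_erase.mpr ⟨hbv, by exact_mod_cast hb⟩)
            omega
          · rw [if_neg hav, if_pos hbv] at hab
            have : r a ≤ M := Finset.le_sup (Finset.mem_erase.mpr ⟨hav, by exact_mod_cast ha⟩)
            omega
          · rw [if_neg hav, if_neg hbv] at hab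
            have ha2 : a ∈ (↑(s.erase v) : Set W) := by
              simp only [Finset.coe_erase, Set.mem_diff, Set.mem_singleton_iff]
              exact ⟨ha, hav⟩
            have hb2 : b ∈ (↑(s.erase v) : Set W) := by
              simp only [Finset.coe_erase, Set.mem_diff, Set.mem_singleton_iff]
              exact ⟨hb, hbv⟩
            exact hrinj ha2 hb2 hab
        · intro u hu
          by_cases huv : u = v
          · subst huv
            refine le_trans (Set.ncard_le_ncard ?_ (Set.toFinite _)) hvd
            intro w hw
            exact ⟨hw.1, hw.2.1⟩
          · have hu' : u ∈ s.erase v := Finset.mem_erase.mpr ⟨huv, hu⟩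
            have hru : r u ≤ M := Finset.le_sup hu'
            have hset : (G.neighborSet u ∩
                {w | w ∈ s ∧ (if w = v then M + 1 else r w) < (if u = v then M + 1 else r u)})
                = G.neighborSet u ∩ {w | w ∈ s.erase v ∧ r w < r u} := by
              ext w
              simp only [Set.mem_inter_iff, Set.mem_setOf_eq, Finset.mem_erase, if_neg huv]
              constructor
              · rintro ⟨h1, h2, h3⟩
                by_cases hwv : w = v
                · rw [if_pos hwv] at h3; omega
                · rw [if_neg hwv] at h3; exact ⟨h1, ⟨hwv, h2⟩, h3⟩
              · rintro ⟨h1, ⟨hwv, h2⟩, h3⟩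
                refine ⟨h1, h2, ?_⟩
                rw [if_neg hwv]; exact h3
            simp only at hset ⊢
            rw [hset]
            exact hrd u hu'
  obtain ⟨r, hrinj, hrd⟩ := main Finset.univ
  refine ⟨r, fun a b hab => hrinj (by simp) (by simp) hab, fun v => ?_⟩
  have := hrd v (Finset.mem_univ v)
  simpa using this


lemma core {V W : Type} [Fintype V] [Fintype W] {d : ℕ} (H : SimpleGraph V) (G : SimpleGraph W)
    (r : W → ℕ) (hrinj : Function.Injective r)
    (hrd : ∀ v, (G.neighborSet v ∩ {w | r w < r v}).ncard ≤ d)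
    (hn : 1 ≤ Fintype.card W) (hV : Nonempty V) :
    Nat.card {f : H →g G // Function.Injective f} ≤
      2 ^ Fintype.card V * ((Fintype.card V * (d+1)) ^ Fintype.card V *
        Fintype.card W ^ alphaD d H) := by
  classical
  have hκ : ∀ w : W, ∃ k : W → Fin (d+1), Set.InjOn k (G.neighborSet w ∩ {x | r x < r w}) := by
    intro w
    set L := G.neighborSet w ∩ {x | r x < r w} with hLdef
    have hcard : Fintype.card L ≤ Fintype.card (Fin (d+1)) := by
      rw [Fintype.card_fin, ← Nat.card_eq_fintype_card, Nat.card_coe_set_eq]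
      exact le_trans (hrd w) (Nat.le_succ d)
    obtain ⟨e⟩ := Function.Embedding.nonempty_of_card_le hcard
    refine ⟨fun x => if hx : x ∈ L then e ⟨x, hx⟩ else 0, ?_⟩
    intro a ha b hb hab
    simp only [dif_pos ha, dif_pos hb] at hab
    exact congrArg Subtype.val (e.injective hab)
  choose κ hκ using hκ
  haveI : Finite (H →g G) := Finite.of_injective (fun f => (f : V → W)) DFunLike.coe_injective
  haveI : Fintype {f : H →g G // Function.Injective ⇑f} := Fintype.ofFinite _
  set Free : {f : H →g G // Function.Injective ⇑f} → Finset V :=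
    fun f => Finset.univ.filter (fun u => ∀ v, H.Adj u v → r (f.1 v) < r (f.1 u)) with hFree
  set P : {f : H →g G // Function.Injective ⇑f} → V → Prop :=
    fun f u => ∃ v, H.Adj u v ∧ r (f.1 u) < r (f.1 v) with hP
  have hfreeP : ∀ f u, u ∈ Free f ↔ ¬ P f u := by
    intro f u
    simp only [hFree, hP, Finset.mem_filter, Finset.mem_univ, true_and]
    constructor
    · rintro hfo ⟨v, hadj, hlt⟩
      exact absurd (hfo v hadj) (by omega)
    · intro hne v hadj
      have h1 : f.1 v ≠ f.1 u := fun he => H.irrefl (f.2 he ▸ hadj)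
      have h2 : r (f.1 v) ≠ r (f.1 u) := fun he => h1 (hrinj he)
      have h3 : ¬ (r (f.1 u) < r (f.1 v)) := fun hlt => hne ⟨v, hadj, hlt⟩
      omega
  set pc : {f : H →g G // Function.Injective ⇑f} → V → V × Fin (d+1) := fun f u =>
    if hu : P f u then (hu.choose, κ (f.1 hu.choose) (f.1 u))
    else (Classical.arbitrary V, 0) with hpc
  have huniq : ∀ f g : {f : H →g G // Function.Injective ⇑f}, Free f = Free g →
      (∀ u, u ∈ Free f → f.1 u = g.1 u) → pc f = pc g → f = g := by
    intro f g hFfg hAg hpcfg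
    have main : ∀ k u, (Finset.univ.filter (fun x => r (f.1 u) < r (f.1 x))).card = k →
        f.1 u = g.1 u := by
      intro k
      induction k using Nat.strong_induction_on with
      | _ k ih =>
        intro u hk
        by_cases hu : u ∈ Free f
        · exact hAg u hu
        · have hPf : P f u := by rwa [hfreeP, not_not] at hu
          have hPg : P g u := by rw [hFfg, hfreeP, not_not] at hu; exact hu
          have he := congrFun hpcfg u
          simp only [hpc, dif_pos hPf, dif_pos hPg, Prod.mk.injEq] at he
          obtain ⟨he1, he2⟩ := he
          obtain ⟨hadj, hlt⟩ := hPf.choose_spec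
          obtain ⟨hadjg, hltg⟩ := hPg.choose_spec
          set v := hPf.choose with hv
          rw [← he1] at hadjg hltg
          have hvfg : f.1 v = g.1 v := by
            refine ih _ ?_ v rfl
            rw [← hk]
            apply Finset.card_lt_card
            rw [Finset.ssubset_iff_of_subset]
            · exact ⟨v, by simpa using hlt, by simp⟩
            · intro x hx
              simp only [Finset.mem_filter, Finset.mem_univ, true_and] at hx ⊢
              omega
          rw [← he1, ← hvfg] at he2
          have h1 : f.1 u ∈ G.neighborSet (f.1 v) ∩ {x | r x < r (f.1 v)} :=
            ⟨(f.1.map_adj hadj).symm, hlt⟩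
          have h2 : g.1 u ∈ G.neighborSet (f.1 v) ∩ {x | r x < r (f.1 v)} := by
            rw [hvfg]
            exact ⟨(g.1.map_adj hadjg).symm, hltg⟩
          exact hκ (f.1 v) h1 h2 he2
    exact Subtype.ext (DFunLike.ext _ _ (fun u => main _ u rfl))
  have hbound : ∀ s : Finset V,
      Nat.card {f : {f : H →g G // Function.Injective ⇑f} // Free f = s} ≤
      (Fintype.card V * (d+1)) ^ Fintype.card V * Fintype.card W ^ alphaD d H := by
    intro s
    rcases isEmpty_or_nonempty {f : {f : H →g G // Function.Injective ⇑f} // Free f = s}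
      with he | hne
    · simp [Nat.card_of_isEmpty]
    · obtain ⟨⟨f₀, hf₀⟩⟩ := hne
      have hsα : s.card ≤ alphaD d H := by
        rw [← Set.ncard_coe_finset]
        apply le_csSup
        · refine ⟨Fintype.card V, ?_⟩
          rintro m ⟨t, -, -, rfl⟩
          have := Set.ncard_le_ncard (Set.subset_univ t) Set.finite_univ
          simpa [Set.ncard_univ, Nat.card_eq_fintype_card] using this
        · refine ⟨(↑s : Set V), ?_, ?_, rfl⟩
          · intro a ha b hb hab hadj
            have ha' : a ∈ Free f₀ := by rw [hf₀]; exact_mod_cast ha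
            have hb' : b ∈ Free f₀ := by rw [hf₀]; exact_mod_cast hb
            simp only [hFree, Finset.mem_filter, Finset.mem_univ, true_and] at ha' hb'
            have h1 := ha' b hadj
            have h2 := hb' a hadj.symm
            omega
          · intro u hu
            have hu' : u ∈ Free f₀ := by rw [hf₀]; exact_mod_cast hu
            simp only [hFree, Finset.mem_filter, Finset.mem_univ, true_and] at hu'
            refine le_trans (Set.ncard_le_ncard_of_injOn f₀.1 ?_ f₀.2.injOn (Set.toFinite _))
              (hrd (f₀.1 u))
            intro v hv
            exact ⟨f₀.1.map_adj hv, hu' v hv⟩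
      have hΦ : ∃ Φ : {f : {f : H →g G // Function.Injective ⇑f} // Free f = s} →
          (((↥s) → W) × (V → V × Fin (d+1))), Function.Injective Φ := by
        refine ⟨fun f => (fun u => f.1.1 u.1, pc f.1), ?_⟩
        intro f g hfg
        simp only [Prod.mk.injEq] at hfg
        obtain ⟨h1, h2⟩ := hfg
        apply Subtype.ext
        refine huniq _ _ (by rw [f.2, g.2]) ?_ h2
        intro u hu
        rw [f.2] at hu
        exact congrFun h1 ⟨u, hu⟩
      obtain ⟨Φ, hΦinj⟩ := hΦ
      calc Nat.card {f : {f : H →g G // Function.Injective ⇑f} // Free f = s}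
          ≤ Nat.card (((↥s) → W) × (V → V × Fin (d+1))) :=
            Nat.card_le_card_of_injective Φ hΦinj
        _ = Fintype.card W ^ s.card * (Fintype.card V * (d+1)) ^ Fintype.card V := by
            rw [Nat.card_eq_fintype_card]
            simp [Fintype.card_fun, Fintype.card_prod, Fintype.card_fin, Fintype.card_coe]
        _ ≤ (Fintype.card V * (d+1)) ^ Fintype.card V * Fintype.card W ^ alphaD d H := by
            rw [mul_comm]
            exact Nat.mul_le_mul_left _ (Nat.pow_le_pow_right hn hsα)
  calc Nat.card {f : H →g G // Function.Injective ⇑f}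
      = Nat.card (Σ s : Finset V, {f : {f : H →g G // Function.Injective ⇑f} // Free f = s}) :=
        Nat.card_congr (Equiv.sigmaFiberEquiv Free).symm
    _ = ∑ s : Finset V,
          Nat.card {f : {f : H →g G // Function.Injective ⇑f} // Free f = s} := by
        rw [Nat.card_eq_fintype_card, Fintype.card_sigma]
        simp [Nat.card_eq_fintype_card]
    _ ≤ ∑ _s : Finset V,
          ((Fintype.card V * (d+1)) ^ Fintype.card V * Fintype.card W ^ alphaD d H) :=
        Finset.sum_le_sum (fun s _ => hbound s)
    _ = 2 ^ Fintype.card V * ((Fintype.card V * (d+1)) ^ Fintype.card V *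
          Fintype.card W ^ alphaD d H) := by
        rw [Finset.sum_const, Finset.card_univ, Fintype.card_finset, smul_eq_mul]


/-- For any integers `d ≥ 0` and `h ≥ 1` there exists `c = c(d,h)` such that for every graph
`H` on `h` vertices and every `d`-degenerate graph `G`, the number of injective homomorphisms
from `H` to `G` is at most `c · |V(G)| ^ α_d(H)`. -/
theorem stmt3 (d h : ℕ) (hh : 1 ≤ h) :
    ∃ c : ℕ, ∀ (V W : Type) [Fintype V] [Fintype W] (H : SimpleGraph V) (G : SimpleGraph W),
      Fintype.card V = h → Degenerate d G →
      Nat.card {f : H →g G // Function.Injective f} ≤ c * (Fintype.card W) ^ (alphaD d H) := by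
  classical
  refine ⟨2 ^ h * (h * (d + 1)) ^ h, ?_⟩
  intro V W _ _ H G hV hG
  haveI hVne : Nonempty V := Fintype.card_pos_iff.mp (by omega)
  rcases Nat.eq_zero_or_pos (Fintype.card W) with hn | hn
  · haveI : IsEmpty W := Fintype.card_eq_zero_iff.mp hn
    haveI : IsEmpty (H →g G) := ⟨fun f => IsEmpty.false (f (Classical.arbitrary V))⟩
    haveI : IsEmpty {f : H →g G // Function.Injective f} := ⟨fun f => IsEmpty.false f.1⟩
    simp [Nat.card_of_isEmpty]
  · obtain ⟨r, hrinj, hrd⟩ := exists_order hG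
    have := core H G r hrinj hrd hn hVne
    rw [hV] at this
    calc Nat.card {f : H →g G // Function.Injective f}
        ≤ 2 ^ h * ((h * (d + 1)) ^ h * Fintype.card W ^ alphaD d H) := this
      _ = 2 ^ h * (h * (d + 1)) ^ h * Fintype.card W ^ alphaD d H := by ring
end

section
/- Let d ≥ 0 be an integer, D_d the class of all d-degenerate graphs, and H a d-degenerate graph. Let S be a set of pairwise non-adjacent vertices of H each of degree at most d, and let L = {(N_H[v], V(H)−{v}) : v ∈ S}. Then for every positive integer k, the graph H ∧_k L (obtained from k disjoint copies of H by identifying the copies of each vertex in V(H)−S) is d-degenerate. -/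
def wedgeRel {V : Type} (H : SimpleGraph V) (Z : Set V) (k : ℕ) :
    (↥Z ⊕ (↥(Zᶜ) × Fin k)) → (↥Z ⊕ (↥(Zᶜ) × Fin k)) → Prop
  | Sum.inl z, Sum.inl z' => H.Adj z z'
  | Sum.inl z, Sum.inr (v, _) => H.Adj z v
  | Sum.inr (v, _), Sum.inl z => H.Adj v z
  | Sum.inr (v, i), Sum.inr (w, j) => i = j ∧ H.Adj v w

/-- `H ∧_k Z`: the graph obtained from `k` disjoint copies of `H` by identifying,
for each `z ∈ Z`, the `k` copies of `z` into a single vertex. -/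
def wedge {V : Type} (H : SimpleGraph V) (Z : Set V) (k : ℕ) :
    SimpleGraph (↥Z ⊕ (↥(Zᶜ) × Fin k)) :=
  SimpleGraph.fromRel (wedgeRel H Z k)

/-- Let `H` be a `d`-degenerate graph, `S` a set of pairwise non-adjacent vertices of `H`
each of degree at most `d`, and `L = {(N_H[v], V(H) − {v}) : v ∈ S}`, so that
`⋂_{(A,B)∈L} B = V(H) − S = Sᶜ`.  Then for every positive integer `k`, the graph
`H ∧_k L` (i.e. `k` disjoint copies of `H` with the copies of each vertex of `V(H) − S`
identified) is `d`-degenerate. -/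
theorem stmt4 {V : Type} [Fintype V] (d : ℕ) (H : SimpleGraph V)
    (hH : Degenerate d H) (S : Set V)
    (hSindep : S.Pairwise fun u v => ¬ H.Adj u v)
    (hSdeg : ∀ v ∈ S, (H.neighborSet v).ncard ≤ d)
    (k : ℕ) (hk : 0 < k) :
    Degenerate d (wedge H Sᶜ k) := by
  classical
  intro s hs
  by_cases hcase : ∃ x ∈ s, ∃ w i, x = Sum.inr (w, i)
  · obtain ⟨x, hxs, w, i, rfl⟩ := hcase
    refine ⟨Sum.inr (w, i), hxs, ?_⟩
    have hw : (w : V) ∈ S := by have := w.2; simpa using this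
    have hsub : (wedge H Sᶜ k).neighborSet (Sum.inr (w, i)) ∩ s ⊆
        Sum.inl '' (Subtype.val ⁻¹' (H.neighborSet (w : V))) := by
      rintro (z | ⟨u, j⟩) ⟨hadj, hzs⟩
      · refine ⟨z, ?_, rfl⟩
        simp only [SimpleGraph.mem_neighborSet, wedge, SimpleGraph.fromRel_adj] at hadj
        rcases hadj.2 with h | h
        · exact h
        · exact h.symm
      · exfalso
        have hu : (u : V) ∈ S := by have := u.2; simpa using this
        simp only [SimpleGraph.mem_neighborSet, wedge, SimpleGraph.fromRel_adj] at hadj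
        rcases hadj.2 with ⟨_, h⟩ | ⟨_, h⟩
        · exact hSindep hw hu h.ne h
        · exact hSindep hw hu h.symm.ne h.symm
    calc ((wedge H Sᶜ k).neighborSet (Sum.inr (w, i)) ∩ s).ncard
        ≤ (Sum.inl '' (Subtype.val ⁻¹' (H.neighborSet (w : V))) :
            Set (↥Sᶜ ⊕ (↥Sᶜᶜ × Fin k))).ncard :=
          Set.ncard_le_ncard hsub (Set.toFinite _)
      _ = (Subtype.val ⁻¹' (H.neighborSet (w : V)) : Set ↥Sᶜ).ncard :=
          Set.ncard_image_of_injective _ Sum.inl_injective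
      _ = (Subtype.val '' (Subtype.val ⁻¹' (H.neighborSet (w : V)) : Set ↥Sᶜ)).ncard :=
          (Set.ncard_image_of_injective _ Subtype.val_injective).symm
      _ ≤ (H.neighborSet (w : V)).ncard :=
          Set.ncard_le_ncard (Set.image_preimage_subset _ _) (Set.toFinite _)
      _ ≤ d := hSdeg _ hw
  · push_neg at hcase
    set s' : Set V := {v | ∃ h : v ∈ Sᶜ, Sum.inl ⟨v, h⟩ ∈ s} with hs'
    have hs'ne : s'.Nonempty := by
      obtain ⟨x, hx⟩ := hs
      match x with
      | Sum.inl z => exact ⟨(z : V), z.2, hx⟩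
      | Sum.inr (w, i) => exact absurd rfl (hcase _ hx w i)
    obtain ⟨v, ⟨hv, hvs⟩, hvd⟩ := hH s' hs'ne
    refine ⟨Sum.inl ⟨v, hv⟩, hvs, ?_⟩
    have hsub : (wedge H Sᶜ k).neighborSet (Sum.inl ⟨v, hv⟩) ∩ s ⊆
        Sum.inl '' (Subtype.val ⁻¹' (H.neighborSet v ∩ s')) := by
      rintro (z | ⟨u, j⟩) ⟨hadj, hzs⟩
      · refine ⟨z, ⟨?_, z.2, hzs⟩, rfl⟩
        simp only [SimpleGraph.mem_neighborSet, wedge, SimpleGraph.fromRel_adj] at hadj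
        rcases hadj.2 with h | h
        · exact h
        · exact h.symm
      · exact absurd rfl (hcase _ hzs u j)
    calc ((wedge H Sᶜ k).neighborSet (Sum.inl ⟨v, hv⟩) ∩ s).ncard
        ≤ (Sum.inl '' (Subtype.val ⁻¹' (H.neighborSet v ∩ s')) :
            Set (↥Sᶜ ⊕ (↥Sᶜᶜ × Fin k))).ncard :=
          Set.ncard_le_ncard hsub (Set.toFinite _)
      _ = (Subtype.val ⁻¹' (H.neighborSet v ∩ s') : Set ↥Sᶜ).ncard :=
          Set.ncard_image_of_injective _ Sum.inl_injective
      _ = (Subtype.val '' (Subtype.val ⁻¹' (H.neighborSet v ∩ s') : Set ↥Sᶜ)).ncard :=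
          (Set.ncard_image_of_injective _ Subtype.val_injective).symm
      _ ≤ (H.neighborSet v ∩ s').ncard :=
          Set.ncard_le_ncard (Set.image_preimage_subset _ _) (Set.toFinite _)
      _ ≤ d := hvd
end

section
/- For every integer d ≥ 2 there are infinitely many d-degenerate graphs H with α_d(H) < flap_d(H). Concretely: let X, Y, Z be disjoint sets where H[Z] = K_{d+1}, Y is a stable set of size d, each vertex of Y is adjacent to exactly d vertices of Z with every vertex of Z adjacent to at least one vertex of Y, X is a nonempty stable set, and every vertex of X has neighborhood exactly Y. Then H is d-degenerate, α_d(H) = |X|, and flap_d(H) ≥ |X| + 1. -/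
def IsSeparation {V : Type} (G : SimpleGraph V) (p : Set V × Set V) : Prop :=
  p.1 ∪ p.2 = Set.univ ∧ ∀ a ∈ p.1 \ p.2, ∀ b ∈ p.2 \ p.1, ¬ G.Adj a b

def IsIndepCollection {V : Type} (G : SimpleGraph V) (C : Set (Set V × Set V)) : Prop :=
  (∀ p ∈ C, IsSeparation G p ∧ (p.1 \ p.2).Nonempty) ∧
  ∀ p ∈ C, ∀ q ∈ C, p ≠ q → p.1 ⊆ q.2 ∧ q.1 ⊆ p.2

/-- `flap_d(H)`: the maximum size of an independent collection of separations of `H`,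
each of order at most `d`. -/
noncomputable def flapD {V : Type} (d : ℕ) (H : SimpleGraph V) : ℕ :=
  sSup {n | ∃ C : Set (Set V × Set V), IsIndepCollection H C ∧
      (∀ p ∈ C, (p.1 ∩ p.2).ncard ≤ d) ∧ C.ncard = n}

/-!
The vertices of `X` have degree `|Y| = d`, while every vertex of `Y` sees `d` vertices of `Z`
and a vertex of `X`, and every vertex of `Z` sees the other `d` vertices of `Z` and a vertex of
`Y`; so `X` is exactly the set of vertices of degree at most `d`, which gives `α_d(H) = |X|`,
and ranking `X` below `Y` below `Z` is a degeneracy ordering. For the flaps, each `x ∈ X` cuts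
itself off by the separation `({x} ∪ Y, V - x)`, and the separation `(Y ∪ Z, X ∪ Y)` cuts off
all of `Z`; these `|X| + 1` separations of order `|Y| = d` are independent.
-/

open Set

section
variable {V : Type} {G : SimpleGraph V}

theorem degenerate_of_ncard_setOf_adj_le [Finite V] {d : ℕ} (r : V → ℕ)
    (h : ∀ v, {w | G.Adj v w ∧ r v ≤ r w}.ncard ≤ d) : Degenerate d G := by
  intro s hs
  refine ⟨Function.argminOn r s hs, Function.argminOn_mem r s hs, ?_⟩
  refine (ncard_le_ncard ?_ (toFinite _)).trans (h (Function.argminOn r s hs))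
  rintro w ⟨hadj, hw⟩
  exact ⟨hadj, not_lt.mp (Function.not_lt_argminOn r s hw)⟩

theorem degenerate_of_three_layers [Finite V] {d : ℕ} {X Y Z : Set V}
    (hcover : X ∪ Y ∪ Z = univ) (hX : ∀ x ∈ X, (G.neighborSet x).ncard ≤ d)
    (hY : G.IsIndepSet Y) (hYZ : ∀ y ∈ Y, (G.neighborSet y ∩ Z).ncard ≤ d)
    (hZ : Z.ncard ≤ d + 1) : Degenerate d G := by
  classical
  have mem_Z : ∀ v, v ∉ X → v ∉ Y → v ∈ Z := fun v hvX hvY => by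
    have hv : v ∈ X ∪ Y ∪ Z := hcover ▸ mem_univ v
    simpa [hvX, hvY] using hv
  refine degenerate_of_ncard_setOf_adj_le
    (fun v => if v ∈ X then 0 else if v ∈ Y then 1 else 2) fun v => ?_
  by_cases hvX : v ∈ X
  · exact (ncard_le_ncard (fun w hw => hw.1) (toFinite _)).trans (hX v hvX)
  by_cases hvY : v ∈ Y
  · refine (ncard_le_ncard ?_ (toFinite _)).trans (hYZ v hvY)
    rintro w ⟨hadj, hw⟩
    by_cases hwX : w ∈ X
    · simp [hvX, hvY, hwX] at hw
    · exact ⟨hadj, mem_Z w hwX fun hwY => hY hvY hwY hadj.ne hadj⟩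
  · refine (ncard_le_ncard (t := Z \ {v}) ?_ (toFinite _)).trans ?_
    · rintro w ⟨hadj, hw⟩
      by_cases hwX : w ∈ X
      · simp [hvX, hvY, hwX] at hw
      by_cases hwY : w ∈ Y
      · simp [hvX, hvY, hwX, hwY] at hw
      exact ⟨mem_Z w hwX hwY, hadj.ne.symm⟩
    · rw [ncard_sdiff_singleton_of_mem (mem_Z v hvX hvY)]
      omega

theorem ncard_lt_ncard_neighborSet [Finite V] {s : Set V} {v w : V}
    (hs : s ⊆ G.neighborSet v) (hw : G.Adj v w) (hws : w ∉ s) :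
    s.ncard < (G.neighborSet v).ncard :=
  ncard_lt_ncard (ssubset_iff_of_subset hs |>.mpr ⟨w, hw, hws⟩)

theorem alphaD_eq_ncard [Finite V] {d : ℕ} {s : Set V} (hs : G.IsIndepSet s)
    (hdeg : ∀ v, (G.neighborSet v).ncard ≤ d ↔ v ∈ s) : alphaD d G = s.ncard := by
  have hmem : s.ncard ∈ {n | ∃ t : Set V, t.Pairwise (fun u v => ¬ G.Adj u v) ∧
      (∀ v ∈ t, (G.neighborSet v).ncard ≤ d) ∧ t.ncard = n} :=
    ⟨s, hs, fun v hv => (hdeg v).2 hv, rfl⟩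
  apply le_antisymm
  · refine csSup_le ⟨_, hmem⟩ ?_
    rintro n ⟨t, -, ht, rfl⟩
    exact ncard_le_ncard fun v hv => (hdeg v).1 (ht v hv)
  · refine le_csSup ⟨Nat.card V, ?_⟩ hmem
    rintro n ⟨t, -, -, rfl⟩
    exact ncard_le_card t

theorem ncard_le_flapD [Finite V] {d : ℕ} {C : Set (Set V × Set V)}
    (hC : IsIndepCollection G C) (hord : ∀ p ∈ C, (p.1 ∩ p.2).ncard ≤ d) :
    C.ncard ≤ flapD d G := by
  refine le_csSup ⟨Nat.card (Set V × Set V), ?_⟩ ⟨C, hC, hord, rfl⟩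
  rintro n ⟨D, -, -, rfl⟩
  exact ncard_le_card D

def starSeparation (G : SimpleGraph V) (x : V) : Set V × Set V :=
  (insert x (G.neighborSet x), {x}ᶜ)

theorem starSeparation_injective (G : SimpleGraph V) : Function.Injective (starSeparation G) :=
  fun _ _ h => singleton_injective (compl_injective congr(($h).2))

theorem isSeparation_starSeparation (x : V) : IsSeparation G (starSeparation G x) := by
  refine ⟨eq_univ_of_forall fun w => (em (w = x)).elim (Or.inl ∘ Or.inl) Or.inr, ?_⟩
  rintro a ⟨-, ha⟩ b ⟨-, hb⟩
  obtain rfl : a = x := by simpa [starSeparation] using ha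
  exact fun hab => hb (mem_insert_of_mem _ hab)

theorem starSeparation_inter (x : V) :
    (starSeparation G x).1 ∩ (starSeparation G x).2 = G.neighborSet x := by
  ext w
  simp only [starSeparation, mem_inter_iff, mem_insert_iff, mem_compl_iff, mem_singleton_iff]
  constructor
  · rintro ⟨hw | hw, hne⟩
    · exact absurd hw hne
    · exact hw
  · exact fun hw => ⟨Or.inr hw, (G.ne_of_adj hw).symm⟩

theorem starSeparation_fst_subset_snd {x y : V} (hxy : x ≠ y) (hadj : ¬ G.Adj x y) :
    (starSeparation G x).1 ⊆ (starSeparation G y).2 := by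
  rintro w (rfl | hw) rfl
  exacts [hxy rfl, hadj hw]

section Flaps
variable {X Y : Set V}

theorem isSeparation_compl_union (hN : ∀ x ∈ X, G.neighborSet x ⊆ Y) :
    IsSeparation G (Xᶜ, X ∪ Y) := by
  refine ⟨eq_univ_of_forall fun w => (em (w ∈ X)).elim (Or.inr ∘ Or.inl) Or.inl, ?_⟩
  rintro a ⟨-, ha⟩ b ⟨hb, hbX⟩ hab
  exact ha (Or.inr (hN b (not_not.mp hbX) hab.symm))

theorem isIndepCollection_insert_image_starSeparation (hXY : Disjoint X Y)
    (hN : ∀ x ∈ X, G.neighborSet x ⊆ Y) (hout : (X ∪ Y)ᶜ.Nonempty) :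
    IsIndepCollection G (insert (Xᶜ, X ∪ Y) (starSeparation G '' X)) := by
  have shore : ∀ x ∈ X, (starSeparation G x).1 ⊆ X ∪ Y ∧ Xᶜ ⊆ (starSeparation G x).2 :=
    fun x hx => ⟨insert_subset (Or.inl hx) ((hN x hx).trans subset_union_right),
      compl_subset_compl.mpr (singleton_subset_iff.mpr hx)⟩
  refine ⟨?_, ?_⟩
  · rintro p (rfl | ⟨x, -, rfl⟩)
    · obtain ⟨v, hv⟩ := hout
      exact ⟨isSeparation_compl_union hN, v, fun h => hv (Or.inl h), hv⟩
    · exact ⟨isSeparation_starSeparation x, x, mem_insert x _, fun h => h rfl⟩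
  · have hnadj : ∀ x ∈ X, ∀ y ∈ X, ¬ G.Adj x y := fun x hx y hy h =>
      disjoint_left.mp hXY hy (hN x hx h)
    rintro p (rfl | ⟨x, hx, rfl⟩) q (rfl | ⟨y, hy, rfl⟩) hpq
    · exact absurd rfl hpq
    · exact (shore y hy).symm
    · exact shore x hx
    · have hxy : x ≠ y := fun h => hpq (h ▸ rfl)
      exact ⟨starSeparation_fst_subset_snd hxy (hnadj x hx y hy),
        starSeparation_fst_subset_snd hxy.symm (hnadj y hy x hx)⟩

theorem ncard_add_one_le_flapD [Finite V] {d : ℕ} (hXY : Disjoint X Y)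
    (hN : ∀ x ∈ X, G.neighborSet x ⊆ Y) (hY : Y.ncard ≤ d) (hout : (X ∪ Y)ᶜ.Nonempty) :
    X.ncard + 1 ≤ flapD d G := by
  have hshore : (Xᶜ, X ∪ Y) ∉ starSeparation G '' X := by
    rintro ⟨x, hx, h⟩
    exact congr(($h).2).symm.subset (Or.inl hx) rfl
  have hcard : (insert (Xᶜ, X ∪ Y) (starSeparation G '' X)).ncard = X.ncard + 1 := by
    rw [ncard_insert_of_notMem hshore, ncard_image_of_injective _ (starSeparation_injective G)]
  refine hcard ▸ ncard_le_flapD (isIndepCollection_insert_image_starSeparation hXY hN hout) ?_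
  rintro p (rfl | ⟨x, hx, rfl⟩)
  · refine (ncard_le_ncard ?_ (toFinite _)).trans hY
    rintro w ⟨hwX, hw | hw⟩
    exacts [absurd hw hwX, hw]
  · rw [starSeparation_inter]
    exact (ncard_le_ncard (hN x hx) (toFinite _)).trans hY

end Flaps

end

theorem stmt5_general {V : Type} [Fintype V] (d : ℕ) (H : SimpleGraph V)
    (X Y Z : Set V)
    (hcover : X ∪ Y ∪ Z = Set.univ)
    (hXY : Disjoint X Y) (hXZ : Disjoint X Z) (hYZ : Disjoint Y Z)
    (hZcard : Z.ncard = d + 1)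
    (hZclique : ∀ u ∈ Z, ∀ v ∈ Z, u ≠ v → H.Adj u v)
    (hYcard : Y.ncard = d)
    (hYstable : Y.Pairwise fun u v => ¬ H.Adj u v)
    (hYZdeg : ∀ y ∈ Y, (H.neighborSet y ∩ Z).ncard = d)
    (hZcov : ∀ z ∈ Z, ∃ y ∈ Y, H.Adj y z)
    (hXne : X.Nonempty)
    (hXstable : X.Pairwise fun u v => ¬ H.Adj u v)
    (hXnbr : ∀ x ∈ X, H.neighborSet x = Y) :
    Degenerate d H ∧ alphaD d H = X.ncard ∧ X.ncard + 1 ≤ flapD d H := by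
  have hXdeg : ∀ x ∈ X, (H.neighborSet x).ncard = d := fun x hx => hXnbr x hx ▸ hYcard
  have hYdeg : ∀ y ∈ Y, d < (H.neighborSet y).ncard := by
    intro y hy
    obtain ⟨x, hx⟩ := hXne
    have hxy : H.Adj y x := (show y ∈ H.neighborSet x from hXnbr x hx ▸ hy).symm
    exact hYZdeg y hy ▸ ncard_lt_ncard_neighborSet inter_subset_left hxy
      fun h => disjoint_left.mp hXZ hx h.2
  have hZdeg : ∀ z ∈ Z, d < (H.neighborSet z).ncard := by
    intro z hz
    obtain ⟨y, hy, hyz⟩ := hZcov z hz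
    have hsub : Z \ {z} ⊆ H.neighborSet z := fun w hw => hZclique z hz w hw.1 (Ne.symm hw.2)
    have hcard : (Z \ {z}).ncard = d := by rw [ncard_sdiff_singleton_of_mem hz, hZcard]; omega
    exact hcard ▸ ncard_lt_ncard_neighborSet hsub hyz.symm
      fun h => disjoint_left.mp hYZ hy h.1
  refine ⟨degenerate_of_three_layers hcover (fun x hx => (hXdeg x hx).le) hYstable
      (fun y hy => (hYZdeg y hy).le) hZcard.le, alphaD_eq_ncard hXstable fun v => ?_,
    ncard_add_one_le_flapD hXY (fun x hx => (hXnbr x hx).le) hYcard.le ?_⟩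
  · refine ⟨fun hv => ?_, fun hv => (hXdeg v hv).le⟩
    have hmem : v ∈ X ∪ Y ∪ Z := hcover ▸ mem_univ v
    rcases hmem with (hvX | hvY) | hvZ
    exacts [hvX, absurd hv (hYdeg v hvY).not_ge, absurd hv (hZdeg v hvZ).not_ge]
  · obtain ⟨z, hz⟩ := nonempty_of_ncard_ne_zero (s := Z) (by omega)
    exact ⟨z, fun h => h.elim (disjoint_left.mp hXZ · hz) (disjoint_left.mp hYZ · hz)⟩

/-- For `d ≥ 2`, the following concrete graphs `H` witness `α_d(H) < flap_d(H)`: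
`V(H)` is partitioned into `X`, `Y`, `Z` where `H[Z] = K_{d+1}`, `Y` is a stable set of size
`d`, each vertex of `Y` is adjacent to exactly `d` vertices of `Z` with every vertex of `Z`
adjacent to at least one vertex of `Y`, `X` is a nonempty stable set, and every vertex of `X`
has neighborhood exactly `Y`.  Then `H` is `d`-degenerate, `α_d(H) = |X|`, and
`flap_d(H) ≥ |X| + 1`. -/
theorem stmt5 {V : Type} [Fintype V] (d : ℕ) (hd : 2 ≤ d) (H : SimpleGraph V)
    (X Y Z : Set V)
    (hcover : X ∪ Y ∪ Z = Set.univ)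
    (hXY : Disjoint X Y) (hXZ : Disjoint X Z) (hYZ : Disjoint Y Z)
    (hZcard : Z.ncard = d + 1)
    (hZclique : ∀ u ∈ Z, ∀ v ∈ Z, u ≠ v → H.Adj u v)
    (hYcard : Y.ncard = d)
    (hYstable : Y.Pairwise fun u v => ¬ H.Adj u v)
    (hYZdeg : ∀ y ∈ Y, (H.neighborSet y ∩ Z).ncard = d)
    (hZcov : ∀ z ∈ Z, ∃ y ∈ Y, H.Adj y z)
    (hXne : X.Nonempty)
    (hXstable : X.Pairwise fun u v => ¬ H.Adj u v)
    (hXnbr : ∀ x ∈ X, H.neighborSet x = Y) :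
    Degenerate d H ∧ alphaD d H = X.ncard ∧ X.ncard + 1 ≤ flapD d H :=
  stmt5_general d H X Y Z hcover hXY hXZ hYZ hZcard hZclique hYcard hYstable hYZdeg hZcov hXne
    hXstable hXnbr
end

section
/- For any positive integers r, h, w there exists a positive integer s = s(r,h,w) such that: for every graph G with no K_{r,r}-subgraph, and collections C₁, C₂ each consisting of pairwise disjoint subsets of V(G) of size at most h, if |C₁| ≥ s and |C₂| ≥ s, then there exist C₁' ⊆ C₁ and C₂' ⊆ C₂ with |C₁'| = |C₂'| = w such that every member of C₁' is disjoint from and non-adjacent in G to every member of C₂'. -/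
/-!
Colour each pair `(S, T) ∈ C₁ × C₂` by whether `S` and `T` are disjoint and whether an edge
joins them, and take a large monochromatic rectangle by bipartite Ramsey. Its pairs cannot all
intersect, since a set of size at most `h` meets at most `h` members of a disjoint family.
Nor can they all be joined by an edge: colour each such pair by the positions of the ends of a
chosen edge inside `S` and inside `T`; a second bipartite Ramsey step makes the end in `S`
depend only on `S` and the end in `T` only on `T`, and these ends span a `K_{r,r}`.
-/

open Finset

theorem Finset.exists_injOn_lt_card {α : Type*} (S : Finset α) :
    ∃ φ : α → ℕ, Set.InjOn φ S ∧ ∀ x ∈ S, φ x < #S := by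
  classical
  exact ⟨S.toList.idxOf, fun x hx y _ hxy => (List.idxOf_inj (mem_toList.2 hx)).1 hxy,
    fun x hx => length_toList S ▸ List.idxOf_lt_length_iff.2 (mem_toList.2 hx)⟩

theorem Finset.card_le_card_of_forall_not_disjoint {α : Type*} {S : Finset α}
    {J : Finset (Finset α)} (hJ : (J : Set (Finset α)).PairwiseDisjoint id)
    (hS : ∀ T ∈ J, ¬Disjoint S T) : #J ≤ #S :=
  card_le_card_of_forall_subsingleton (fun T x => x ∈ T)
    (fun T hT => by simpa [Finset.not_disjoint_iff, and_comm] using hS T hT)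
    (fun x _ T hT T' hT' => hJ.elim_finset hT.1 hT'.1 x hT.2 hT'.2)

theorem Finset.exists_monochromatic_subset_of_mul_lt_card {α γ : Type*} {X : Finset α}
    {t : Finset γ} {f : α → γ} {a : ℕ} (hf : ∀ x ∈ X, f x ∈ t) (hX : #t * a < #X) :
    ∃ k ∈ t, ∃ I ⊆ X, #I = a ∧ ∀ x ∈ I, f x = k := by
  classical
  obtain ⟨k, hk, hfiber⟩ := exists_lt_card_fiber_of_mul_lt_card_of_maps_to hf hX
  obtain ⟨I, hI, rfl⟩ := exists_subset_card_eq hfiber.le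
  exact ⟨k, hk, I, hI.trans (filter_subset _ _), rfl, fun x hx => (mem_filter.1 (hI hx)).2⟩

theorem Finset.exists_monochromatic_rectangle {γ : Type*} (t : Finset γ) (a b : ℕ) :
    ∃ N, ∀ {α β : Type*} (X : Finset α) (Y : Finset β) (f : α → β → γ),
      (∀ x ∈ X, ∀ y ∈ Y, f x y ∈ t) → N ≤ #X → N ≤ #Y →
      ∃ I ⊆ X, ∃ J ⊆ Y, #I = a ∧ #J = b ∧ ∃ k, ∀ x ∈ I, ∀ y ∈ J, f x y = k := by
  classical
  set n := #t * a + 1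
  refine ⟨max n (n.choose a * #t * b + 1), fun X Y f hf hX hY => ?_⟩
  obtain ⟨X', hX', hX'card⟩ := exists_subset_card_eq (le_of_max_le_left hX)
  have column : ∀ y ∈ Y, ∃ c ∈ X'.powersetCard a ×ˢ t, ∀ x ∈ c.1, f x y = c.2 := by
    intro y hy
    obtain ⟨k, hk, I, hI, hIcard, hIk⟩ := exists_monochromatic_subset_of_mul_lt_card (a := a)
      (fun x hx => hf x (hX' hx) y hy) (by omega)
    exact ⟨(I, k), mem_product.2 ⟨mem_powersetCard.2 ⟨hI, hIcard⟩, hk⟩, hIk⟩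
  have : Nonempty γ := by
    obtain ⟨x, -⟩ := card_pos.1 (show 0 < #X by omega)
    obtain ⟨y, -⟩ := card_pos.1 (show 0 < #Y by omega)
    exact ⟨f x y⟩
  choose! c hc hcf using column
  obtain ⟨⟨I, k⟩, hIk, J, hJ, hJcard, hJc⟩ := exists_monochromatic_subset_of_mul_lt_card
    (t := X'.powersetCard a ×ˢ t) (a := b) hc
    (by rw [card_product, card_powersetCard, hX'card]; omega)
  obtain ⟨hI, hIcard⟩ := mem_powersetCard.1 (mem_product.1 hIk).1
  refine ⟨I, hI.trans hX', J, hJ, hIcard, hJcard, k, fun x hx y hy => ?_⟩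
  have hcy := hcf y (hJ hy)
  rw [hJc y hy] at hcy
  exact hcy x hx

theorem SimpleGraph.exists_biclique_of_forall_exists_adj (h r : ℕ) :
    ∃ N, ∀ {W : Type*} (G : SimpleGraph W) (I J : Finset (Finset W)),
      (I : Set (Finset W)).PairwiseDisjoint id → (J : Set (Finset W)).PairwiseDisjoint id →
      (∀ S ∈ I, #S ≤ h) → (∀ T ∈ J, #T ≤ h) →
      (∀ S ∈ I, ∀ T ∈ J, ∃ x ∈ S, ∃ y ∈ T, G.Adj x y) → N ≤ #I → N ≤ #J →
      ∃ A B : Finset W, #A = r ∧ #B = r ∧ Disjoint A B ∧ ∀ a ∈ A, ∀ b ∈ B, G.Adj a b := by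
  classical
  obtain ⟨N, hN⟩ := exists_monochromatic_rectangle (range h ×ˢ range h) r r
  refine ⟨N, fun {W} G I J hI hJ hIh hJh hadj hNI hNJ => ?_⟩
  choose x hx y hy hxy using fun (S : I) (T : J) => hadj S S.2 T T.2
  choose pos pos_injOn pos_lt using fun S : Finset W => S.exists_injOn_lt_card
  obtain ⟨I', -, J', -, hI'card, hJ'card, k, hk⟩ :=
    hN I.attach J.attach (fun S T => (pos S (x S T), pos T (y S T)))
      (fun S _ T _ => mem_product.2 ⟨mem_range.2 ((pos_lt _ _ (hx S T)).trans_le (hIh S S.2)),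
        mem_range.2 ((pos_lt _ _ (hy S T)).trans_le (hJh T T.2))⟩)
      (by rwa [card_attach]) (by rwa [card_attach])
  obtain rfl | hr := r.eq_zero_or_pos
  · exact ⟨∅, ∅, by simp⟩
  obtain ⟨S₀, hS₀⟩ := card_pos.1 (hI'card ▸ hr)
  obtain ⟨T₀, hT₀⟩ := card_pos.1 (hJ'card ▸ hr)
  have hx_eq : ∀ S ∈ I', ∀ T ∈ J', x S T = x S T₀ := fun S hS T hT =>
    pos_injOn S (hx S T) (hx S T₀)
      (congrArg Prod.fst ((hk S hS T hT).trans (hk S hS T₀ hT₀).symm))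
  have hy_eq : ∀ S ∈ I', ∀ T ∈ J', y S T = y S₀ T := fun S hS T hT =>
    pos_injOn T (hy S T) (hy S₀ T)
      (congrArg Prod.snd ((hk S hS T hT).trans (hk S₀ hS₀ T hT).symm))
  have hAB : ∀ S ∈ I', ∀ T ∈ J', G.Adj (x S T₀) (y S₀ T) := fun S hS T hT =>
    hx_eq S hS T hT ▸ hy_eq S hS T hT ▸ hxy S T
  have hA_inj : Set.InjOn (fun S => x S T₀) I' := fun S _ S' _ hSS' =>
    Subtype.ext (hI.elim_finset S.2 S'.2 _ (hx S T₀)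
      (by rw [show x S T₀ = x S' T₀ from hSS']; exact hx S' T₀))
  have hB_inj : Set.InjOn (fun T => y S₀ T) J' := fun T _ T' _ hTT' =>
    Subtype.ext (hJ.elim_finset T.2 T'.2 _ (hy S₀ T)
      (by rw [show y S₀ T = y S₀ T' from hTT']; exact hy S₀ T'))
  have hcomplete : ∀ a ∈ I'.image (x · T₀), ∀ b ∈ J'.image (y S₀), G.Adj a b := by
    simp only [mem_image]
    rintro _ ⟨S, hS, rfl⟩ _ ⟨T, hT, rfl⟩
    exact hAB S hS T hT
  refine ⟨I'.image (x · T₀), J'.image (y S₀), by rw [card_image_of_injOn hA_inj, hI'card],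
    by rw [card_image_of_injOn hB_inj, hJ'card], ?_, hcomplete⟩
  exact Finset.disjoint_left.2 fun a ha hb => G.irrefl (hcomplete a ha a hb)

theorem stmt7_general (r h w : ℕ) :
    ∃ s : ℕ, 0 < s ∧
      ∀ (W : Type) [Fintype W] [DecidableEq W] (G : SimpleGraph W),
        (¬ ∃ A B : Finset W, A.card = r ∧ B.card = r ∧ Disjoint A B ∧
            ∀ a ∈ A, ∀ b ∈ B, G.Adj a b) →
        ∀ C₁ C₂ : Finset (Finset W),
          ((C₁ : Set (Finset W)).Pairwise fun S T => Disjoint S T) →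
          ((C₂ : Set (Finset W)).Pairwise fun S T => Disjoint S T) →
          (∀ S ∈ C₁, S.card ≤ h) → (∀ T ∈ C₂, T.card ≤ h) →
          s ≤ C₁.card → s ≤ C₂.card →
          ∃ C₁' ⊆ C₁, ∃ C₂' ⊆ C₂, C₁'.card = w ∧ C₂'.card = w ∧
            ∀ S ∈ C₁', ∀ T ∈ C₂', Disjoint S T ∧ ∀ a ∈ S, ∀ b ∈ T, ¬ G.Adj a b := by
  obtain ⟨N, hN⟩ := SimpleGraph.exists_biclique_of_forall_exists_adj h r
  obtain ⟨s, hs⟩ := exists_monochromatic_rectangle (univ : Finset (Prop × Prop))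
    (max (max N (h + 1)) w) (max (max N (h + 1)) w)
  refine ⟨s + 1, s.succ_pos, fun W _ _ G hK C₁ C₂ hC₁ hC₂ hC₁h hC₂h hs₁ hs₂ => ?_⟩
  obtain ⟨I, hI, J, hJ, hIcard, hJcard, ⟨disj, adj⟩, hk⟩ := hs C₁ C₂
    (fun S T => (Disjoint S T, ∃ a ∈ S, ∃ b ∈ T, G.Adj a b)) (fun _ _ _ _ => mem_univ _)
    (by omega) (by omega)
  simp only [Prod.mk.injEq] at hk
  by_cases hdisj : disj
  swap
  · obtain ⟨S, hS⟩ := card_pos.1 (show 0 < #I by omega)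
    have hJ_le : #J ≤ #S := card_le_card_of_forall_not_disjoint (hC₂.mono (coe_subset.2 hJ))
      fun T hT => (hk S hS T hT).1 ▸ hdisj
    have hS_le := hC₁h S (hI hS)
    omega
  by_cases hadj : adj
  · exact absurd (hN G I J (hC₁.mono (coe_subset.2 hI)) (hC₂.mono (coe_subset.2 hJ))
      (fun S hS => hC₁h S (hI hS)) (fun T hT => hC₂h T (hJ hT))
      (fun S hS T hT => (hk S hS T hT).2 ▸ hadj) (by omega) (by omega)) hK
  obtain ⟨I', hI', hI'card⟩ := exists_subset_card_eq (show w ≤ #I by omega)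
  obtain ⟨J', hJ', hJ'card⟩ := exists_subset_card_eq (show w ≤ #J by omega)
  refine ⟨I', hI'.trans hI, J', hJ'.trans hJ, hI'card, hJ'card, fun S hS T hT => ?_⟩
  obtain ⟨hST, hnadj⟩ := hk S (hI' hS) T (hJ' hT)
  exact ⟨hST ▸ hdisj, fun a ha b hb hab => hadj (hnadj ▸ ⟨a, ha, b, hb, hab⟩)⟩

/-- For any positive integers `r, h, w` there exists `s = s(r,h,w)` such that: for every
graph `G` with no `K_{r,r}`-subgraph and collections `C₁, C₂`, each of pairwise disjoint
vertex subsets of size at most `h`, with `|C₁|, |C₂| ≥ s`, there exist `C₁' ⊆ C₁` and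
`C₂' ⊆ C₂` with `|C₁'| = |C₂'| = w` such that every member of `C₁'` is disjoint from and
non-adjacent in `G` to every member of `C₂'`. -/
theorem stmt7 (r h w : ℕ) (hr : 0 < r) (hh : 0 < h) (hw : 0 < w) :
    ∃ s : ℕ, 0 < s ∧
      ∀ (W : Type) [Fintype W] [DecidableEq W] (G : SimpleGraph W),
        (¬ ∃ A B : Finset W, A.card = r ∧ B.card = r ∧ Disjoint A B ∧
            ∀ a ∈ A, ∀ b ∈ B, G.Adj a b) →
        ∀ C₁ C₂ : Finset (Finset W),
          ((C₁ : Set (Finset W)).Pairwise fun S T => Disjoint S T) →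
          ((C₂ : Set (Finset W)).Pairwise fun S T => Disjoint S T) →
          (∀ S ∈ C₁, S.card ≤ h) → (∀ T ∈ C₂, T.card ≤ h) →
          s ≤ C₁.card → s ≤ C₂.card →
          ∃ C₁' ⊆ C₁, ∃ C₂' ⊆ C₂, C₁'.card = w ∧ C₂'.card = w ∧
            ∀ S ∈ C₁', ∀ T ∈ C₂', Disjoint S T ∧ ∀ a ∈ S, ∀ b ∈ T, ¬ G.Adj a b :=
  stmt7_general r h w
end

section
/- For any positive integers r, h, w, p there exists a positive integer s = s(r,h,w,p) such that: for every graph G with no K_{r,r}-subgraph and collections C₁, …, C_p, each consisting of pairwise disjoint subsets of V(G) of size at most h with |C_i| ≥ s for all i, there exist subsets C_i' ⊆ C_i with |C_i'| = w for each i such that for all 1 ≤ i₁ < i₂ ≤ p, every member of C_{i₁}' is disjoint from and non-adjacent in G to every member of C_{i₂}'. -/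
/-!
Colour a pair `(S, T)` taken from two collections by the way it fails to be separated: either
the `a`-th vertex of `S` lies in `T`, or the `a`-th vertex of `S` is adjacent to the `b`-th vertex
of `T`. Positions are bounded by `h`, so there are finitely many colours, and a bipartite Ramsey
argument yields large subcollections on which the colour is constant. The first kind of colour is
impossible because the members of the second collection are pairwise disjoint, and the second
kind would produce a `K_{k,k}` with `k ≥ r`; so the subcollections are separated. For `p`
collections, treat the pairs of indices one at a time: separation survives passing to
subcollections.
-/

open Finset

theorem exists_monochromatic_rect {α β κ : Type*} [Fintype κ] [Nonempty κ]
    (f : α → β → κ) {k : ℕ} {X : Finset α} {Y : Finset β}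
    (hX : Fintype.card κ * k ≤ #X) (hY : Fintype.card κ ^ (Fintype.card κ * k) * k ≤ #Y) :
    ∃ A ⊆ X, ∃ B ⊆ Y, k ≤ #A ∧ k ≤ #B ∧ ∃ γ, ∀ a ∈ A, ∀ b ∈ B, f a b = γ := by
  classical
  obtain ⟨X₀, hX₀X, hX₀⟩ := exists_subset_card_eq hX
  set column : β → X₀ → κ := fun b a => f a b
  obtain ⟨g, -, hg⟩ := exists_le_card_fiber_of_mul_le_card_of_maps_to (f := column)
    (fun _ _ => mem_univ _) univ_nonempty (by simpa [hX₀] using hY)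
  obtain ⟨γ, -, hγ⟩ := exists_le_card_fiber_of_mul_le_card_of_maps_to (f := g) (s := X₀.attach)
    (fun _ _ => mem_univ _) univ_nonempty (by simpa [hX₀] using le_rfl)
  refine ⟨{a ∈ X₀.attach | g a = γ}.map (Function.Embedding.subtype _), ?_,
    {b ∈ Y | column b = g}, filter_subset _ _, by simpa using hγ, hg, γ, ?_⟩
  · intro a ha
    obtain ⟨a, -, rfl⟩ := mem_map.1 ha
    exact hX₀X a.2
  · intro a ha b hb
    obtain ⟨a, haγ, rfl⟩ := mem_map.1 ha
    rw [← (mem_filter.1 haγ).2, ← (mem_filter.1 hb).2]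
    rfl

theorem SimpleGraph.exists_biclique {W : Type*} {G : SimpleGraph W} {U V : Finset W} {r : ℕ}
    (hU : r ≤ #U) (hV : r ≤ #V) (hUV : ∀ u ∈ U, ∀ v ∈ V, G.Adj u v) :
    ∃ A B : Finset W, #A = r ∧ #B = r ∧ Disjoint A B ∧ ∀ a ∈ A, ∀ b ∈ B, G.Adj a b := by
  obtain ⟨A, hAU, hA⟩ := exists_subset_card_eq hU
  obtain ⟨B, hBV, hB⟩ := exists_subset_card_eq hV
  refine ⟨A, B, hA, hB, Finset.disjoint_left.2 fun x hxA hxB => ?_,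
    fun a ha b hb => hUV a (hAU ha) b (hBV hb)⟩
  exact G.irrefl (hUV x (hAU hxA) x (hBV hxB))

theorem exists_forall_injOn_fin (W : Type*) (h : ℕ) :
    ∃ pos : Finset W → W → Fin (h + 1), ∀ S : Finset W, #S ≤ h → Set.InjOn (pos S) S := by
  classical
  refine ⟨fun S v => Fin.ofNat (h + 1) (S.toList.idxOf v), fun S hS v hv v' hv' hvv' => ?_⟩
  have hlt : ∀ u ∈ S, S.toList.idxOf u < h + 1 := fun u hu => by
    have := List.idxOf_lt_length_iff.2 (mem_toList.2 hu)
    rw [length_toList] at this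
    omega
  have := congrArg Fin.val hvv'
  simp only [Fin.val_ofNat, Nat.mod_eq_of_lt (hlt v hv), Nat.mod_eq_of_lt (hlt v' hv')] at this
  exact (List.idxOf_inj (mem_toList.2 hv)).1 this

section PairColour

variable {W κ : Type*} (G : SimpleGraph W) (pos : Finset W → W → κ)

def PairColour (S T : Finset W) : Option ((κ × κ) ⊕ κ) → Prop
  | none => Disjoint S T ∧ ∀ a ∈ S, ∀ b ∈ T, ¬ G.Adj a b
  | some (.inl (a, b)) => ∃ u ∈ S, ∃ v ∈ T, G.Adj u v ∧ pos S u = a ∧ pos T v = b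
  | some (.inr a) => ∃ v ∈ S, v ∈ T ∧ pos S v = a

theorem exists_pairColour (S T : Finset W) : ∃ γ, PairColour G pos S T γ := by
  by_cases hST : ∃ v ∈ S, v ∈ T
  · obtain ⟨v, hvS, hvT⟩ := hST
    exact ⟨some (.inr (pos S v)), v, hvS, hvT, rfl⟩
  by_cases hadj : ∃ u ∈ S, ∃ v ∈ T, G.Adj u v
  · obtain ⟨u, hu, v, hv, huv⟩ := hadj
    exact ⟨some (.inl (pos S u, pos T v)), u, hu, v, hv, huv, rfl, rfl⟩
  push Not at hST hadj
  exact ⟨none, disjoint_left.2 hST, hadj⟩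

variable {G pos}

theorem card_le_one_of_forall_pairColour_inr {S : Finset W} {B : Finset (Finset W)} {a : κ}
    (hB : (B : Set (Finset W)).Pairwise Disjoint) (hS : Set.InjOn (pos S) S)
    (hSB : ∀ T ∈ B, PairColour G pos S T (some (.inr a))) : #B ≤ 1 := by
  refine card_le_one.2 fun T hT T' hT' => by_contra fun hne => ?_
  obtain ⟨v, hvS, hvT, hva⟩ := hSB T hT
  obtain ⟨v', hv'S, hv'T', hv'a⟩ := hSB T' hT'
  have hvv' : v = v' := hS hvS hv'S (hva.trans hv'a.symm)
  exact disjoint_left.1 (hB hT hT' hne) hvT (hvv' ▸ hv'T')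

theorem exists_biclique_of_forall_pairColour_inl {r : ℕ} {A B : Finset (Finset W)} {a b : κ}
    (hA : (A : Set (Finset W)).Pairwise Disjoint) (hB : (B : Set (Finset W)).Pairwise Disjoint)
    (hposA : ∀ S ∈ A, Set.InjOn (pos S) S) (hposB : ∀ T ∈ B, Set.InjOn (pos T) T)
    (hAB : ∀ S ∈ A, ∀ T ∈ B, PairColour G pos S T (some (.inl (a, b))))
    (hAr : r ≤ #A) (hBr : r ≤ #B) :
    ∃ X Y : Finset W, #X = r ∧ #Y = r ∧ Disjoint X Y ∧ ∀ x ∈ X, ∀ y ∈ Y, G.Adj x y := by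
  classical
  obtain rfl | hr := r.eq_zero_or_pos
  · exact ⟨∅, ∅, by simp⟩
  obtain ⟨S₀, hS₀⟩ := card_pos.1 (hr.trans_le hAr)
  obtain ⟨T₀, hT₀⟩ := card_pos.1 (hr.trans_le hBr)
  refine G.exists_biclique (U := A.biUnion fun S => {u ∈ S | pos S u = a})
    (V := B.biUnion fun T => {v ∈ T | pos T v = b}) ?_ ?_ ?_
  · refine hAr.trans (card_le_card_biUnion ?_ fun S hS => ?_)
    · exact hA.mono' fun S T h => h.mono (filter_subset _ _) (filter_subset _ _)
    · obtain ⟨u, hu, -, -, -, hua, -⟩ := hAB S hS T₀ hT₀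
      exact ⟨u, mem_filter.2 ⟨hu, hua⟩⟩
  · refine hBr.trans (card_le_card_biUnion ?_ fun T hT => ?_)
    · exact hB.mono' fun S T h => h.mono (filter_subset _ _) (filter_subset _ _)
    · obtain ⟨-, -, v, hv, -, -, hvb⟩ := hAB S₀ hS₀ T hT
      exact ⟨v, mem_filter.2 ⟨hv, hvb⟩⟩
  · simp only [mem_biUnion, mem_filter]
    rintro u ⟨S, hS, huS, hua⟩ v ⟨T, hT, hvT, hvb⟩
    obtain ⟨u', hu'S, v', hv'T, hu'v', hu'a, hv'b⟩ := hAB S hS T hT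
    rwa [hposA S hS huS hu'S (hua.trans hu'a.symm), hposB T hT hvT hv'T (hvb.trans hv'b.symm)]

end PairColour

/-- With `c` colours, blocks of size `k = max 2 (max r w)` suffice: `2 ≤ k` excludes the colours
`some (inr a)` and `r ≤ k` the colours `some (inl (a, b))`. -/
def separationBound (r h w : ℕ) : ℕ :=
  let c := Fintype.card (Option ((Fin (h + 1) × Fin (h + 1)) ⊕ Fin (h + 1)))
  let k := max 2 (max r w)
  max (c * k) (c ^ (c * k) * k)

theorem exists_separated_subfamilies {W : Type*} {G : SimpleGraph W} {r h w : ℕ}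
    (hG : ¬ ∃ A B : Finset W, #A = r ∧ #B = r ∧ Disjoint A B ∧ ∀ a ∈ A, ∀ b ∈ B, G.Adj a b)
    {C₁ C₂ : Finset (Finset W)} (hC₁ : (C₁ : Set (Finset W)).Pairwise Disjoint)
    (hC₂ : (C₂ : Set (Finset W)).Pairwise Disjoint) (hh₁ : ∀ S ∈ C₁, #S ≤ h)
    (hh₂ : ∀ T ∈ C₂, #T ≤ h) (hs₁ : separationBound r h w ≤ #C₁)
    (hs₂ : separationBound r h w ≤ #C₂) :
    ∃ D₁ ⊆ C₁, ∃ D₂ ⊆ C₂, w ≤ #D₁ ∧ w ≤ #D₂ ∧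
      ∀ S ∈ D₁, ∀ T ∈ D₂, Disjoint S T ∧ ∀ a ∈ S, ∀ b ∈ T, ¬ G.Adj a b := by
  obtain ⟨pos, hpos⟩ := exists_forall_injOn_fin W h
  choose colour hcolour using exists_pairColour G pos
  obtain ⟨A, hAC, B, hBC, hA, hB, γ, hγ⟩ :=
    exists_monochromatic_rect colour (le_of_max_le_left hs₁) (le_of_max_le_right hs₂)
  have hAB : ∀ S ∈ A, ∀ T ∈ B, PairColour G pos S T γ := fun S hS T hT =>
    hγ S hS T hT ▸ hcolour S T
  rcases γ with _ | ⟨a, b⟩ | a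
  · exact ⟨A, hAC, B, hBC, by omega, by omega, hAB⟩
  · exact (hG (exists_biclique_of_forall_pairColour_inl (hC₁.mono hAC) (hC₂.mono hBC)
      (fun S hS => hpos S (hh₁ S (hAC hS))) (fun T hT => hpos T (hh₂ T (hBC hT))) hAB
      (r := r) (by omega) (by omega))).elim
  · obtain ⟨S, hS⟩ := card_pos.1 (show 0 < #A by omega)
    have := card_le_one_of_forall_pairColour_inr (hC₂.mono hBC) (hpos S (hh₁ S (hAC hS)))
      (hAB S hS)
    omega

/-- Each pair in `E` costs one application of `hs`; the `max` keeps the families not involved in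
that application large. -/
theorem exists_subfamilies_forall_rel {ι β : Type*} [DecidableEq ι] (R : β → β → Prop)
    (s : ℕ → ℕ) (C : ι → Finset β) (E : Finset (ι × ι)) (hE : ∀ e ∈ E, e.1 ≠ e.2)
    (hs : ∀ e ∈ E, ∀ n, ∀ X ⊆ C e.1, ∀ Y ⊆ C e.2, s n ≤ #X → s n ≤ #Y →
      ∃ X' ⊆ X, ∃ Y' ⊆ Y, n ≤ #X' ∧ n ≤ #Y' ∧ ∀ x ∈ X', ∀ y ∈ Y', R x y)
    (w : ℕ) (hC : ∀ i, (fun n => max n (s n))^[#E] w ≤ #(C i)) :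
    ∃ C' : ι → Finset β, (∀ i, C' i ⊆ C i) ∧ (∀ i, w ≤ #(C' i)) ∧
      ∀ e ∈ E, ∀ x ∈ C' e.1, ∀ y ∈ C' e.2, R x y := by
  classical
  induction E using Finset.induction_on generalizing w with
  | empty => exact ⟨C, fun i => subset_rfl, hC, by simp⟩
  | @insert e E he ih =>
    rw [card_insert_of_notMem he, Function.iterate_succ_apply] at hC
    obtain ⟨C', hC'C, hC'w, hC'R⟩ := ih (fun e' he' => hE e' (mem_insert_of_mem he'))
      (fun e' he' => hs e' (mem_insert_of_mem he')) _ hC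
    obtain ⟨X, hX, Y, hY, hXw, hYw, hXY⟩ := hs e (mem_insert_self e E) w (C' e.1) (hC'C _)
      (C' e.2) (hC'C _) (le_of_max_le_right (hC'w _)) (le_of_max_le_right (hC'w _))
    set C'' := Function.update (Function.update C' e.1 X) e.2 Y
    have hC''₁ : C'' e.1 = X := by
      simp [C'', Function.update_of_ne (hE e (mem_insert_self e E))]
    have hC''₂ : C'' e.2 = Y := by simp [C'']
    have hC''C' : ∀ i, C'' i ⊆ C' i := by
      intro i
      simp only [C'', Function.update_apply]
      split_ifs with h₂ h₁
      · exact h₂ ▸ hY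
      · exact h₁ ▸ hX
      · exact subset_rfl
    refine ⟨C'', fun i => (hC''C' i).trans (hC'C i), fun i => ?_, ?_⟩
    · simp only [C'', Function.update_apply]
      split_ifs
      exacts [hYw, hXw, le_of_max_le_left (hC'w i)]
    · rintro e' he' x hx y hy
      obtain rfl | he' := mem_insert.1 he'
      · exact hXY x (hC''₁ ▸ hx) y (hC''₂ ▸ hy)
      · exact hC'R e' he' x (hC''C' _ hx) y (hC''C' _ hy)

theorem stmt8_general (r h w p : ℕ) :
    ∃ s : ℕ, 0 < s ∧
      ∀ (W : Type) [Fintype W] [DecidableEq W] (G : SimpleGraph W),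
        (¬ ∃ A B : Finset W, A.card = r ∧ B.card = r ∧ Disjoint A B ∧
            ∀ a ∈ A, ∀ b ∈ B, G.Adj a b) →
        ∀ C : Fin p → Finset (Finset W),
          (∀ i, ((C i : Set (Finset W)).Pairwise fun S T => Disjoint S T)) →
          (∀ i, ∀ S ∈ C i, S.card ≤ h) →
          (∀ i, s ≤ (C i).card) →
          ∃ C' : Fin p → Finset (Finset W),
            (∀ i, C' i ⊆ C i) ∧ (∀ i, (C' i).card = w) ∧
            ∀ i₁ i₂ : Fin p, i₁ < i₂ →
              ∀ S ∈ C' i₁, ∀ T ∈ C' i₂, Disjoint S T ∧ ∀ a ∈ S, ∀ b ∈ T, ¬ G.Adj a b := by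
  let E : Finset (Fin p × Fin p) := {e | e.1 < e.2}
  refine ⟨(fun n => max n (separationBound r h n))^[#E] w + 1, Nat.succ_pos _, ?_⟩
  intro W _ _ G hG C hC hh hs
  obtain ⟨C', hC'C, hC'w, hC'sep⟩ := exists_subfamilies_forall_rel _ (separationBound r h) C E
    (fun e he => (mem_filter.1 he).2.ne)
    (fun e _ n X hX Y hY hXn hYn => exists_separated_subfamilies hG ((hC _).mono hX)
      ((hC _).mono hY) (fun S hS => hh _ S (hX hS)) (fun T hT => hh _ T (hY hT)) hXn hYn)
    w (fun i => (Nat.le_succ _).trans (hs i))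
  choose D hDC' hDw using fun i => exists_subset_card_eq (hC'w i)
  refine ⟨D, fun i => (hDC' i).trans (hC'C i), hDw, fun i₁ i₂ hi S hS T hT => ?_⟩
  exact hC'sep (i₁, i₂) (mem_filter.2 ⟨mem_univ _, hi⟩) S (hDC' i₁ hS) T (hDC' i₂ hT)

/-- For any positive integers `r, h, w, p` there exists `s = s(r,h,w,p)` such that: for every
graph `G` with no `K_{r,r}`-subgraph and collections `C 0, …, C (p-1)`, each consisting of
pairwise disjoint vertex subsets of size at most `h` with `|C i| ≥ s` for all `i`, there exist
subcollections `C' i ⊆ C i` with `|C' i| = w` such that for all `i₁ < i₂`, every member of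
`C' i₁` is disjoint from and non-adjacent in `G` to every member of `C' i₂`. -/
theorem stmt8 (r h w p : ℕ) (hr : 0 < r) (hh : 0 < h) (hw : 0 < w) (hp : 0 < p) :
    ∃ s : ℕ, 0 < s ∧
      ∀ (W : Type) [Fintype W] [DecidableEq W] (G : SimpleGraph W),
        (¬ ∃ A B : Finset W, A.card = r ∧ B.card = r ∧ Disjoint A B ∧
            ∀ a ∈ A, ∀ b ∈ B, G.Adj a b) →
        ∀ C : Fin p → Finset (Finset W),
          (∀ i, ((C i : Set (Finset W)).Pairwise fun S T => Disjoint S T)) →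
          (∀ i, ∀ S ∈ C i, S.card ≤ h) →
          (∀ i, s ≤ (C i).card) →
          ∃ C' : Fin p → Finset (Finset W),
            (∀ i, C' i ⊆ C i) ∧ (∀ i, (C' i).card = w) ∧
            ∀ i₁ i₂ : Fin p, i₁ < i₂ →
              ∀ S ∈ C' i₁, ∀ T ∈ C' i₂, Disjoint S T ∧ ∀ a ∈ S, ∀ b ∈ T, ¬ G.Adj a b :=
  stmt8_general r h w p
end

section
/- For any positive integers r, t, c, m, p there exists a positive integer s = s(r,t,c,m,p) such that the following holds. Let G be a bipartite graph with bipartition {A,B}, with each edge colored by an element of [c], and suppose G has no subgraph isomorphic to K_{r,t} whose part of t vertices lies in A. If |A| ≥ s, then there is a subset A' ⊆ A with |A'| ≥ m such that for every T ⊆ B with |T| ≤ p, there exists M_T ⊆ A' with |M_T| ≥ m such that for every v ∈ T, either there is a color c_v ∈ [c] such that v is adjacent to all vertices of A' via edges of color c_v, or v is non-adjacent to all vertices of M_T. -/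
lemma stmt9_aux (t c m p : ℕ) (ht : 0 < t) (hc : 0 < c) (hm : 0 < m) :
    ∀ r : ℕ, ∃ s : ℕ, 0 < s ∧
      ∀ (W : Type) [DecidableEq W] (adj : W → W → Prop) (col : W → W → Fin c)
        (A B : Finset W),
        (¬ ∃ (S T : Finset W), S ⊆ B ∧ T ⊆ A ∧ S.card = r ∧ T.card = t ∧
            ∀ x ∈ S, ∀ y ∈ T, adj x y) →
        s ≤ A.card →
        ∃ A' ⊆ A, m ≤ A'.card ∧
          ∀ T ⊆ B, T.card ≤ p →
            ∃ M ⊆ A', m ≤ M.card ∧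
              ∀ v ∈ T,
                (∃ cv : Fin c, ∀ a ∈ A', adj v a ∧ col v a = cv) ∨
                (∀ a ∈ M, ¬ adj v a) := by
  intro r
  induction r with
  | zero =>
    refine ⟨t, ht, ?_⟩
    intro W _ adj col A B hK hs
    exfalso
    obtain ⟨T, hTA, hTcard⟩ := Finset.exists_subset_card_eq hs
    exact hK ⟨∅, T, Finset.empty_subset _, hTA, Finset.card_empty, hTcard, by simp⟩
  | succ r ih =>
    obtain ⟨s', hs'pos, H⟩ := ih
    refine ⟨m + p * (c * s'), Nat.lt_of_lt_of_le hm (Nat.le_add_right _ _), ?_⟩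
    intro W _ adj col A B hK hs
    classical
    by_cases h : ∀ T ⊆ B, T.card ≤ p →
        ∃ M ⊆ A, m ≤ M.card ∧
          ∀ v ∈ T,
            (∃ cv : Fin c, ∀ a ∈ A, adj v a ∧ col v a = cv) ∨
            (∀ a ∈ M, ¬ adj v a)
    · exact ⟨A, subset_rfl, le_trans (Nat.le_add_right _ _) hs, h⟩
    push_neg at h
    obtain ⟨T₀, hT₀B, hT₀p, hbad⟩ := h
    set Bad : Finset W :=
      T₀.filter (fun v => ¬ ∃ cv : Fin c, ∀ a ∈ A, adj v a ∧ col v a = cv) with hBad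
    set M₀ : Finset W := A.filter (fun a => ∀ v ∈ Bad, ¬ adj v a) with hM₀
    have hM₀lt : M₀.card < m := by
      by_contra hge
      push_neg at hge
      obtain ⟨v, hvT₀, hv1, a, haM, hadj⟩ := hbad M₀ (Finset.filter_subset _ _) hge
      have hv1' : ¬ ∃ cv : Fin c, ∀ a ∈ A, adj v a ∧ col v a = cv := by
        push_neg; exact hv1
      have hvBad : v ∈ Bad := Finset.mem_filter.2 ⟨hvT₀, hv1'⟩
      exact (Finset.mem_filter.1 haM).2 v hvBad hadj
    -- covering: A ⊆ M₀ ∪ ⋃_{v ∈ Bad} N(v)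
    have hcover : A ⊆ M₀ ∪ Bad.biUnion (fun v => A.filter (fun a => adj v a)) := by
      intro a ha
      by_cases hav : ∀ v ∈ Bad, ¬ adj v a
      · exact Finset.mem_union_left _ (Finset.mem_filter.2 ⟨ha, hav⟩)
      · push_neg at hav
        obtain ⟨v, hvB, hva⟩ := hav
        exact Finset.mem_union_right _
          (Finset.mem_biUnion.2 ⟨v, hvB, Finset.mem_filter.2 ⟨ha, hva⟩⟩)
    have hcount : A.card ≤ M₀.card + ∑ v ∈ Bad, (A.filter (fun a => adj v a)).card :=
      le_trans (Finset.card_le_card hcover)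
        (le_trans (Finset.card_union_le _ _) (by gcongr; exact Finset.card_biUnion_le))
    have hsum : p * (c * s') < ∑ v ∈ Bad, (A.filter (fun a => adj v a)).card := by
      have := le_trans hs hcount
      omega
    have hexv : ∃ v ∈ Bad, c * s' < (A.filter (fun a => adj v a)).card := by
      by_contra hall
      push_neg at hall
      have : ∑ v ∈ Bad, (A.filter (fun a => adj v a)).card ≤ Bad.card * (c * s') :=
        Finset.sum_le_card_nsmul _ _ _ (by simpa using hall)
      have hBadcard : Bad.card ≤ p :=
        le_trans (Finset.card_le_card (Finset.filter_subset _ _)) hT₀p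
      have : ∑ v ∈ Bad, (A.filter (fun a => adj v a)).card ≤ p * (c * s') :=
        le_trans this (Nat.mul_le_mul_right _ hBadcard)
      omega
    obtain ⟨v, hvBad, hvdeg⟩ := hexv
    set N : Finset W := A.filter (fun a => adj v a) with hN
    -- pigeonhole on colors
    have hpig : ∃ c₀ ∈ (Finset.univ : Finset (Fin c)), s' <
        (N.filter (fun a => col v a = c₀)).card := by
      apply Finset.exists_lt_card_fiber_of_mul_lt_card_of_maps_to
      · intro x _; exact Finset.mem_univ _
      · simpa [Fintype.card_fin] using hvdeg
    obtain ⟨c₀, -, hc₀⟩ := hpig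
    set A₁ : Finset W := N.filter (fun a => col v a = c₀) with hA₁
    have hA₁A : A₁ ⊆ A := (Finset.filter_subset _ _).trans (Finset.filter_subset _ _)
    have hvadj : ∀ a ∈ A₁, adj v a ∧ col v a = c₀ := by
      intro a ha
      have h1 := Finset.mem_filter.1 ha
      exact ⟨(Finset.mem_filter.1 h1.1).2, h1.2⟩
    have hvB : v ∈ B := hT₀B (Finset.mem_of_mem_filter _ hvBad)
    -- no K_{r,t} between B.erase v and A₁
    have hK' : ¬ ∃ (S T : Finset W), S ⊆ B.erase v ∧ T ⊆ A₁ ∧ S.card = r ∧ T.card = t ∧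
        ∀ x ∈ S, ∀ y ∈ T, adj x y := by
      rintro ⟨S, T, hSB, hTA₁, hScard, hTcard, hST⟩
      have hvS : v ∉ S := fun hv => (Finset.mem_erase.1 (hSB hv)).1 rfl
      refine hK ⟨insert v S, T, ?_, hTA₁.trans hA₁A, ?_, hTcard, ?_⟩
      · intro x hx
        rcases Finset.mem_insert.1 hx with rfl | hx
        · exact hvB
        · exact (Finset.mem_erase.1 (hSB hx)).2
      · rw [Finset.card_insert_of_notMem hvS, hScard]
      · intro x hx y hy
        rcases Finset.mem_insert.1 hx with rfl | hx
        · exact (hvadj y (hTA₁ hy)).1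
        · exact hST x hx y hy
    obtain ⟨A', hA'A₁, hA'card, hA'prop⟩ := H W adj col A₁ (B.erase v) hK' (le_of_lt hc₀)
    refine ⟨A', hA'A₁.trans hA₁A, hA'card, ?_⟩
    intro T hTB hTp
    obtain ⟨M, hMA', hMcard, hMprop⟩ := hA'prop (T.erase v)
      (Finset.erase_subset_erase v hTB)
      (le_trans (Finset.card_erase_le) hTp)
    refine ⟨M, hMA', hMcard, ?_⟩
    intro w hwT
    by_cases hwv : w = v
    · subst hwv
      left
      exact ⟨c₀, fun a ha => hvadj a (hA'A₁ ha)⟩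
    · exact hMprop w (Finset.mem_erase.2 ⟨hwv, hwT⟩)


/-- For any positive integers `r, t, c, m, p` there exists `s` such that the following holds.
Let `G` be a bipartite graph with bipartition `{A, B}`, each edge colored by an element of
`Fin c`, with no `K_{r,t}`-subgraph whose part of `t` vertices lies in `A`.  If `|A| ≥ s`,
then there is `A' ⊆ A` with `|A'| ≥ m` such that for every `T ⊆ B` with `|T| ≤ p` there
exists `M_T ⊆ A'` with `|M_T| ≥ m` such that every `v ∈ T` either is adjacent to all of `A'`
via edges of one common color, or is non-adjacent to all vertices of `M_T`. -/
theorem stmt9 (r t c m p : ℕ) (hr : 0 < r) (ht : 0 < t) (hc : 0 < c) (hm : 0 < m)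
    (hp : 0 < p) :
    ∃ s : ℕ, 0 < s ∧
      ∀ (W : Type) [Fintype W] [DecidableEq W] (G : SimpleGraph W) (A B : Finset W)
        (col : W → W → Fin c),
        Disjoint A B → A ∪ B = Finset.univ →
        (∀ u v, G.Adj u v → (u ∈ A ∧ v ∈ B) ∨ (u ∈ B ∧ v ∈ A)) →
        (¬ ∃ (S T : Finset W), S ⊆ B ∧ T ⊆ A ∧ S.card = r ∧ T.card = t ∧
            ∀ x ∈ S, ∀ y ∈ T, G.Adj x y) →
        s ≤ A.card →
        ∃ A' ⊆ A, m ≤ A'.card ∧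
          ∀ T ⊆ B, T.card ≤ p →
            ∃ M ⊆ A', m ≤ M.card ∧
              ∀ v ∈ T,
                (∃ cv : Fin c, ∀ a ∈ A', G.Adj v a ∧ col v a = cv) ∨
                (∀ a ∈ M, ¬ G.Adj v a) := by
  obtain ⟨s, hspos, H⟩ := stmt9_aux t c m p ht hc hm r
  exact ⟨s, hspos, fun W _ _ G A B col _ _ _ hK hs => H W G.Adj col A B hK hs⟩
end

section
/- Let G be a monotone class of graphs, H a graph, and k a nonnegative integer. If L is a G-duplicable independent collection of separations of H in which every separation has order at most k, then there exists an essential G-duplicable independent collection L' of separations of H with |L'| ≥ |L| in which every separation has order at most k. -/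
/-- A collection `L` of separations of `H` is essential if for every `(A,B) ∈ L`, every
vertex of `A ∩ B` has a neighbor in `A \ B` and `H[A \ B]` is connected. -/
def EssentialCollection {V : Type} (H : SimpleGraph V) (L : Set (Set V × Set V)) : Prop :=
  ∀ p ∈ L, (∀ v ∈ p.1 ∩ p.2, ∃ u ∈ p.1 \ p.2, H.Adj v u) ∧
    (H.induce (p.1 \ p.2)).Connected

/-- `⋂_{(A,B) ∈ C} B`. -/
def interB {V : Type} (C : Set (Set V × Set V)) : Set V := ⋂ p ∈ C, p.2

/-- `H ∧_k C := H ∧_k (⋂_{(A,B) ∈ C} B)`. -/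
def wedgeC {V : Type} (H : SimpleGraph V) (C : Set (Set V × Set V)) (k : ℕ) :
    SimpleGraph (↥(interB C) ⊕ (↥((interB C)ᶜ) × Fin k)) :=
  wedge H (interB C) k

/-- A class of graphs, given as a predicate on graphs over arbitrary vertex types. -/
abbrev GraphClass : Type 1 := ∀ (U : Type), SimpleGraph U → Prop

/-- `H` is isomorphic to a subgraph of `G`. -/
def SubgraphOf {V W : Type} (H : SimpleGraph V) (G : SimpleGraph W) : Prop :=
  ∃ f : V → W, Function.Injective f ∧ ∀ ⦃u v⦄, H.Adj u v → G.Adj (f u) (f v)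

/-- A class of (finite) graphs is monotone if it is closed under taking subgraphs. -/
def MonotoneClass (𝒢 : GraphClass) : Prop :=
  ∀ (V W : Type) [Fintype V] [Fintype W] (H : SimpleGraph V) (G : SimpleGraph W),
    SubgraphOf H G → 𝒢 W G → 𝒢 V H

/-- An independent collection `L` of separations of `H` is `𝒢`-duplicable if
`H ∧_k L ∈ 𝒢` for infinitely many positive integers `k`. -/
def Duplicable (𝒢 : GraphClass) {V : Type} (H : SimpleGraph V)
    (L : Set (Set V × Set V)) : Prop :=
  {k : ℕ | 0 < k ∧ 𝒢 _ (wedgeC H L k)}.Infinite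


section Helpers

variable {V : Type} (H : SimpleGraph V)

/-- Closed neighborhood of a set. -/
def Ncl (C : Set V) : Set V := C ∪ {x | ∃ y ∈ C, H.Adj x y}

/-- The component of `v` in `H[S]`, as a subset of `V`. -/
def comp (S : Set V) (v : V) : Set V :=
  {w | ∃ (hv : v ∈ S) (hw : w ∈ S), (H.induce S).Reachable ⟨v, hv⟩ ⟨w, hw⟩}

lemma comp_subset (S : Set V) (v : V) : comp H S v ⊆ S := by
  rintro w ⟨_, hw, _⟩; exact hw

lemma mem_comp_self (S : Set V) {v : V} (hv : v ∈ S) : v ∈ comp H S v :=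
  ⟨hv, hv, SimpleGraph.Reachable.refl _⟩

lemma comp_adj_mem {S : Set V} {v u w : V} (hu : u ∈ comp H S v) (hwS : w ∈ S)
    (hadj : H.Adj u w) : w ∈ comp H S v := by
  obtain ⟨hv, huS, r⟩ := hu
  exact ⟨hv, hwS, r.trans (SimpleGraph.Adj.reachable
    (show (H.induce S).Adj ⟨u, huS⟩ ⟨w, hwS⟩ from hadj))⟩

lemma comp_eq_of_mem {S : Set V} {v w : V} (hw : w ∈ comp H S v) :
    comp H S w = comp H S v := by
  obtain ⟨hv, hwS, rvw⟩ := hw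
  ext x
  constructor
  · rintro ⟨_, hx, r⟩; exact ⟨hv, hx, rvw.trans r⟩
  · rintro ⟨_, hx, r⟩; exact ⟨hwS, hx, rvw.symm.trans r⟩

lemma comp_connected {S : Set V} {v : V} (hv : v ∈ S) :
    (H.induce (comp H S v)).Connected := by
  set C := comp H S v with hC
  have hvC : v ∈ C := mem_comp_self H S hv
  have key : ∀ (a b : ↥S) (W : (H.induce S).Walk a b) (ha : (a : V) ∈ C),
      ∃ hb : (b : V) ∈ C, (H.induce C).Reachable ⟨a, ha⟩ ⟨b, hb⟩ := by
    intro a b W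
    induction W with
    | nil => intro ha; exact ⟨ha, SimpleGraph.Reachable.refl _⟩
    | @cons x y z h W ih =>
      intro ha
      have hy : (y : V) ∈ C := comp_adj_mem H ha y.2 h
      obtain ⟨hb, hr⟩ := ih hy
      exact ⟨hb, (SimpleGraph.Adj.reachable
        (show (H.induce C).Adj ⟨x, ha⟩ ⟨y, hy⟩ from h)).trans hr⟩
  rw [SimpleGraph.connected_iff]
  refine ⟨?_, ⟨⟨v, hvC⟩⟩⟩
  have reach : ∀ x : ↥C, (H.induce C).Reachable ⟨v, hvC⟩ x := by
    rintro ⟨x, hx⟩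
    obtain ⟨hv', hxS, r⟩ := hx
    obtain ⟨W⟩ := r
    obtain ⟨hb, hr⟩ := key ⟨v, hv'⟩ ⟨x, hxS⟩ W hvC
    exact hr
  intro x y
  exact (reach x).symm.trans (reach y)

/-- The new separation associated to a component. -/
def newPair (C : Set V) : Set V × Set V := (Ncl H C, Cᶜ)

lemma newPair_diff (C : Set V) : (newPair H C).1 \ (newPair H C).2 = C := by
  ext x
  simp only [newPair, Set.mem_diff, Set.mem_compl_iff, not_not]
  exact ⟨fun h => h.2, fun h => ⟨Or.inl h, h⟩⟩

end Helpers

/-- The collection of separations obtained by splitting each separation of `L` into its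
components. -/
def splitColl {V : Type} (H : SimpleGraph V) (L : Set (Set V × Set V)) :
    Set (Set V × Set V) :=
  {q | ∃ p ∈ L, ∃ v ∈ p.1 \ p.2, q = newPair H (comp H (p.1 \ p.2) v)}

section Main

variable {V : Type} {H : SimpleGraph V} {L : Set (Set V × Set V)}

lemma newPair_isSep (H : SimpleGraph V) (C : Set V) : IsSeparation H (newPair H C) := by
  constructor
  · ext x
    simp only [newPair, Set.mem_union, Set.mem_compl_iff, Set.mem_univ, iff_true, Ncl]
    by_cases h : x ∈ C
    · exact Or.inl (Or.inl h)
    · exact Or.inr h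
  · intro a ha b hb hadj
    rw [newPair_diff] at ha
    apply hb.2
    exact Or.inr ⟨a, ha, hadj.symm⟩

/-- The key disjointness: distinct new pairs have `Ncl C` disjoint from `D`. -/
lemma key_disj (hsep : ∀ p ∈ L, IsSeparation H p)
    (hind : ∀ p ∈ L, ∀ q ∈ L, p ≠ q → p.1 ⊆ q.2 ∧ q.1 ⊆ p.2)
    {p q : Set V × Set V} (hp : p ∈ L) (hq : q ∈ L)
    {v w : V} (hw : w ∈ q.1 \ q.2)
    (hne : newPair H (comp H (p.1 \ p.2) v) ≠ newPair H (comp H (q.1 \ q.2) w)) :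
    ∀ x ∈ Ncl H (comp H (p.1 \ p.2) v), x ∉ comp H (q.1 \ q.2) w := by
  set C := comp H (p.1 \ p.2) v with hC
  set D := comp H (q.1 \ q.2) w with hD
  intro x hx hxD
  by_cases hpq : p = q
  · subst hpq
    have hCD : C = D := by
      have hxC : x ∈ C := by
        rcases hx with hx | ⟨y, hy, hadj⟩
        · exact hx
        · exact comp_adj_mem H hy (comp_subset H _ _ hxD) hadj.symm
      rw [hC, hD, ← comp_eq_of_mem H hxC, comp_eq_of_mem H hxD]
    exact hne (by rw [hCD])
  · obtain ⟨h12, h21⟩ := hind p hp q hq hpq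
    have hxq : x ∈ q.1 \ q.2 := comp_subset H _ _ hxD
    rcases hx with hx | ⟨y, hy, hadj⟩
    · exact hxq.2 (h12 (comp_subset H _ _ hx).1)
    · have hyp : y ∈ p.1 \ p.2 := comp_subset H _ _ hy
      have hxp2 : x ∈ p.2 := h21 hxq.1
      have hxp1 : x ∉ p.1 := fun h => hxq.2 (h12 h)
      exact (hsep p hp).2 y hyp x ⟨hxp2, hxp1⟩ hadj.symm

end Main


/-- Let `𝒢` be a monotone class of graphs, `H` a graph, `k` a nonnegative integer.  If `L` is
a `𝒢`-duplicable independent collection of separations of `H` each of order at most `k`,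
then there is an essential `𝒢`-duplicable independent collection `L'` of separations of `H`
with `|L'| ≥ |L|`, each separation of order at most `k`. -/
theorem stmt11 (𝒢 : GraphClass) (h𝒢 : MonotoneClass 𝒢)
    {V : Type} [Fintype V] (H : SimpleGraph V) (k : ℕ)
    (L : Set (Set V × Set V)) (hL : IsIndepCollection H L)
    (hord : ∀ p ∈ L, (p.1 ∩ p.2).ncard ≤ k)
    (hdup : Duplicable 𝒢 H L) :
    ∃ L' : Set (Set V × Set V), IsIndepCollection H L' ∧ EssentialCollection H L' ∧
      Duplicable 𝒢 H L' ∧ L.ncard ≤ L'.ncard ∧ ∀ p ∈ L', (p.1 ∩ p.2).ncard ≤ k := by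
  classical
  obtain ⟨hmem, hind⟩ := hL
  have hsep : ∀ p ∈ L, IsSeparation H p := fun p hp => (hmem p hp).1
  have huniv : ∀ p ∈ L, ∀ x : V, x ∉ p.1 → x ∈ p.2 := by
    intro p hp x hx
    have h := (hsep p hp).1
    have : x ∈ p.1 ∪ p.2 := by rw [h]; trivial
    rcases this with h' | h'
    · exact absurd h' hx
    · exact h'
  refine ⟨splitColl H L, ?_, ?_, ?_, ?_, ?_⟩
  · -- independent collection
    constructor
    · rintro q ⟨p, hp, v, hv, rfl⟩
      refine ⟨newPair_isSep H _, ?_⟩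
      rw [newPair_diff]
      exact ⟨v, mem_comp_self H _ hv⟩
    · rintro q1 ⟨p, hp, v, hv, rfl⟩ q2 ⟨q, hq, w, hw, rfl⟩ hne
      constructor
      · intro x hx
        exact key_disj hsep hind hp hq hw hne x hx
      · intro x hx
        exact key_disj hsep hind hq hp hv (Ne.symm hne) x hx
  · -- essential
    rintro q ⟨p, hp, v, hv, rfl⟩
    constructor
    · rintro x ⟨hx1, hx2⟩
      rcases hx1 with hxC | ⟨y, hy, hadj⟩
      · exact absurd hxC hx2
      · refine ⟨y, ?_, hadj⟩
        rw [newPair_diff]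
        exact hy
    · rw [newPair_diff]
      exact comp_connected H hv
  · -- duplicable
    have hB : interB (splitColl H L) = interB L := by
      ext x
      simp only [interB, Set.mem_iInter]
      constructor
      · intro h p hp
        by_contra hx2
        have hx1 : x ∈ p.1 := by
          by_contra h1
          exact hx2 (huniv p hp x h1)
        have hxS : x ∈ p.1 \ p.2 := ⟨hx1, hx2⟩
        have hmem' : newPair H (comp H (p.1 \ p.2) x) ∈ splitColl H L :=
          ⟨p, hp, x, hxS, rfl⟩
        have := h _ hmem'
        exact this (mem_comp_self H _ hxS)
      · rintro h q ⟨p, hp, v, hv, rfl⟩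
        intro hxC
        exact (comp_subset H _ _ hxC).2 (h p hp)
    unfold Duplicable wedgeC at hdup ⊢
    rw [hB]
    exact hdup
  · -- cardinality
    set f : Set V × Set V → Set V × Set V := fun p =>
      if h : (p.1 \ p.2).Nonempty then newPair H (comp H (p.1 \ p.2) h.choose) else p
      with hf
    have hmapsto : ∀ p ∈ L, f p ∈ splitColl H L := by
      intro p hp
      have h := (hmem p hp).2
      simp only [hf, dif_pos h]
      exact ⟨p, hp, h.choose, h.choose_spec, rfl⟩
    have hinj : Set.InjOn f L := by
      intro p hp q hq hfeq
      by_contra hne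
      have h1 := (hmem p hp).2
      have h2 := (hmem q hq).2
      simp only [hf, dif_pos h1, dif_pos h2] at hfeq
      have h2nd := congrArg Prod.snd hfeq
      have hCD : comp H (p.1 \ p.2) h1.choose = comp H (q.1 \ q.2) h2.choose := by
        simpa [newPair] using congrArg compl h2nd
      have hv := h1.choose_spec
      have hmemq : h1.choose ∈ comp H (q.1 \ q.2) h2.choose :=
        hCD ▸ mem_comp_self H _ hv
      have : h1.choose ∈ q.1 \ q.2 := comp_subset H _ _ hmemq
      exact hv.2 ((hind p hp q hq hne).2 this.1)
    exact Set.ncard_le_ncard_of_injOn f hmapsto hinj (Set.toFinite _)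
  · -- order bound
    rintro q ⟨p, hp, v, hv, rfl⟩
    have hsub : (newPair H (comp H (p.1 \ p.2) v)).1 ∩ (newPair H (comp H (p.1 \ p.2) v)).2
        ⊆ p.1 ∩ p.2 := by
      rintro x ⟨hx1, hx2⟩
      rcases hx1 with hxC | ⟨y, hy, hadj⟩
      · exact absurd hxC hx2
      · have hyp : y ∈ p.1 \ p.2 := comp_subset H _ _ hy
        have hxp1 : x ∈ p.1 := by
          by_contra h1
          have hxp2 : x ∈ p.2 := huniv p hp x h1
          exact (hsep p hp).2 y hyp x ⟨hxp2, h1⟩ hadj.symm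
        have hxp2 : x ∈ p.2 := by
          by_contra h2
          exact hx2 (comp_adj_mem H hy ⟨hxp1, h2⟩ hadj.symm)
        exact ⟨hxp1, hxp2⟩
    exact le_trans (Set.ncard_le_ncard hsub (Set.toFinite _)) (hord p hp)
end

section
/- Let G be a monotone class of graphs, H a graph, t a nonnegative integer, and L an independent collection of separations of H each of order at most t. If G is closed under (≤ t)-sums and every torso of L belongs to G, then L is G-duplicable. -/
/-- The central torso of `L`: `H` induced on `⋂_{(A,B)∈L} B`, with each `A ∩ B` completed to
a clique. -/
def centralTorso {V : Type} (H : SimpleGraph V) (L : Set (Set V × Set V)) :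
    SimpleGraph (↥(interB L)) :=
  SimpleGraph.fromRel fun a b =>
    H.Adj a b ∨ ∃ p ∈ L, (a : V) ∈ p.1 ∩ p.2 ∧ (b : V) ∈ p.1 ∩ p.2

/-- The peripheral torso for `(X,Y) ∈ L`: `H` induced on `X`, with `X ∩ Y` completed to a
clique. -/
def periTorso {V : Type} (H : SimpleGraph V) (X Y : Set V) : SimpleGraph (↥X) :=
  SimpleGraph.fromRel fun a b =>
    H.Adj a b ∨ ((a : V) ∈ X ∩ Y ∧ (b : V) ∈ X ∩ Y)

/-- `G` is a `(≤ k)`-sum of `G₁` and `G₂`. -/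
def IsCliqueSumLE {Wt W₁ W₂ : Type} (k : ℕ) (G : SimpleGraph Wt)
    (G₁ : SimpleGraph W₁) (G₂ : SimpleGraph W₂) : Prop :=
  ∃ A B : Set Wt, A ∪ B = Set.univ ∧ (A ∩ B).ncard ≤ k ∧
    (∀ a b, G.Adj a b → (a ∈ A ∧ b ∈ A) ∨ (a ∈ B ∧ b ∈ B)) ∧
    (∃ e₁ : W₁ ≃ ↥A, ∀ x y : W₁,
        G₁.Adj x y ↔ (G.Adj (e₁ x : Wt) (e₁ y : Wt) ∨
          (x ≠ y ∧ (e₁ x : Wt) ∈ A ∩ B ∧ (e₁ y : Wt) ∈ A ∩ B))) ∧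
    (∃ e₂ : W₂ ≃ ↥B, ∀ x y : W₂,
        G₂.Adj x y ↔ (G.Adj (e₂ x : Wt) (e₂ y : Wt) ∨
          (x ≠ y ∧ (e₂ x : Wt) ∈ A ∩ B ∧ (e₂ y : Wt) ∈ A ∩ B)))

/-!
Complete every adhesion set `A ∩ B` inside the central part of `H ∧_k L` to a clique. The
resulting graph is obtained from the central torso by gluing on, one at a time, a copy of the
peripheral torso of `(A, B)` along the clique `A ∩ B`, for each `(A, B) ∈ L` and each of the `k`
copies. Every gluing is a `(≤ t)`-sum, so this graph lies in `𝒢` for every `k`, and by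
monotonicity so does its subgraph `H ∧_k L`.
-/

open Function

def ClosedUnderCliqueSums (𝒢 : GraphClass) (t : ℕ) : Prop :=
  ∀ (Wt W₁ W₂ : Type) [Fintype Wt] [Fintype W₁] [Fintype W₂]
    (G : SimpleGraph Wt) (G₁ : SimpleGraph W₁) (G₂ : SimpleGraph W₂),
    𝒢 W₁ G₁ → 𝒢 W₂ G₂ → IsCliqueSumLE t G G₁ G₂ → 𝒢 Wt G

def SimpleGraph.torsoOn {U : Type} (F : SimpleGraph U) (A C : Set U) : SimpleGraph ↥A where
  Adj x y := F.Adj x y ∨ (x ≠ y ∧ (x : U) ∈ C ∧ (y : U) ∈ C)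
  symm.symm _ _ := Or.imp (fun h => h.symm) fun ⟨hxy, hx, hy⟩ => ⟨hxy.symm, hy, hx⟩
  loopless.irrefl _ := by rintro (h | ⟨h, -⟩); exacts [h.ne rfl, h rfl]

section GraphClass

variable {𝒢 : GraphClass}

theorem MonotoneClass.mem_of_subgraphOf (h𝒢 : MonotoneClass 𝒢) {V W : Type} [Finite V]
    [Finite W] {H : SimpleGraph V} {G : SimpleGraph W} (hHG : SubgraphOf H G) (hG : 𝒢 W G) :
    𝒢 V H := by
  have := Fintype.ofFinite V
  have := Fintype.ofFinite W
  exact h𝒢 V W H G hHG hG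

theorem ClosedUnderCliqueSums.induce_union_mem {t : ℕ} (hsum : ClosedUnderCliqueSums 𝒢 t)
    {U : Type} [Finite U] {F : SimpleGraph U} {A B : Set U} (hcard : (A ∩ B).ncard ≤ t)
    (hsep : ∀ a ∈ A \ B, ∀ b ∈ B \ A, ¬ F.Adj a b)
    (hA : 𝒢 _ (F.torsoOn A (A ∩ B))) (hB : 𝒢 _ (F.torsoOn B (A ∩ B))) :
    𝒢 _ (F.induce (A ∪ B)) := by
  have := Fintype.ofFinite ↥(A ∪ B)
  have := Fintype.ofFinite ↥A
  have := Fintype.ofFinite ↥B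
  refine hsum _ _ _ _ _ _ hA hB
    ⟨{x : ↥(A ∪ B) | (x : U) ∈ A}, {x : ↥(A ∪ B) | (x : U) ∈ B}, ?_, ?_, ?_,
    ⟨⟨fun a => ⟨⟨a, Or.inl a.2⟩, a.2⟩, fun a => ⟨a.1, a.2⟩, fun _ => rfl, fun _ => rfl⟩,
      fun _ _ => Iff.rfl⟩,
    ⟨⟨fun b => ⟨⟨b, Or.inr b.2⟩, b.2⟩, fun b => ⟨b.1, b.2⟩, fun _ => rfl, fun _ => rfl⟩,
      fun _ _ => Iff.rfl⟩⟩
  · exact Set.eq_univ_of_forall fun x => x.2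
  · have hrange : A ∩ B ⊆ Set.range ((↑) : ↥(A ∪ B) → U) := by
      rw [Subtype.range_coe]
      exact fun x hx => Or.inl hx.1
    exact (Set.ncard_preimage_of_injective_subset_range Subtype.val_injective hrange).trans_le
      hcard
  · intro a b hab
    have h₁ := fun ha hb => hsep a ha b hb hab
    have h₂ := fun hb ha => hsep b hb a ha hab.symm
    have ha := a.2
    have hb := b.2
    simp only [Set.mem_sdiff, Set.mem_union] at h₁ h₂ ha hb
    simp only [Set.mem_ofPred_eq]
    tauto

end GraphClass

theorem interB_subset_snd {V : Type} {L : Set (Set V × Set V)} {p : Set V × Set V}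
    (hp : p ∈ L) : interB L ⊆ p.2 :=
  fun _ hv => Set.mem_iInter₂.mp hv p hp

theorem IsSeparation.mem_fst_of_adj {V : Type} {H : SimpleGraph V} {p : Set V × Set V}
    (hp : IsSeparation H p) {u v : V} (hu : u ∈ p.2) (hv : v ∈ p.1 \ p.2) (huv : H.Adj u v) :
    u ∈ p.1 := by
  by_contra hu₁
  exact hp.2 v hv u ⟨hu, hu₁⟩ huv.symm

namespace IsIndepCollection

variable {V : Type} {H : SimpleGraph V} {L : Set (Set V × Set V)} {p q : Set V × Set V}

theorem eq_of_mem_diff (hL : IsIndepCollection H L) (hp : p ∈ L) (hq : q ∈ L) {v : V}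
    (hvp : v ∈ p.1 \ p.2) (hvq : v ∈ q.1 \ q.2) : p = q := by
  by_contra hpq
  exact hvq.2 ((hL.2 p hp q hq hpq).1 hvp.1)

theorem exists_mem_diff (hL : IsIndepCollection H L) {v : V} (hv : v ∉ interB L) :
    ∃ p ∈ L, v ∈ p.1 \ p.2 := by
  simp only [interB, Set.mem_iInter, not_forall] at hv
  obtain ⟨p, hp, hvp⟩ := hv
  have hcover : v ∈ p.1 ∪ p.2 := (hL.1 p hp).1.1 ▸ Set.mem_univ v
  exact ⟨p, hp, hcover.resolve_right hvp, hvp⟩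

theorem mem_interB (hL : IsIndepCollection H L) (hp : p ∈ L) {v : V} (hv : v ∈ p.1 ∩ p.2) :
    v ∈ interB L :=
  Set.mem_iInter₂.mpr fun q hq => by
    rcases eq_or_ne p q with rfl | hpq
    · exact hv.2
    · exact (hL.2 p hp q hq hpq).1 hv.1

theorem mem_diff_of_adj (hL : IsIndepCollection H L) (hp : p ∈ L) {v w : V}
    (hv : v ∈ p.1 \ p.2) (hw : w ∉ interB L) (hvw : H.Adj v w) : w ∈ p.1 \ p.2 := by
  obtain ⟨q, hq, hwq⟩ := hL.exists_mem_diff hw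
  rcases eq_or_ne q p with rfl | hqp
  · exact hwq
  · refine absurd hvw ((hL.1 p hp).1.2 v hv w ⟨(hL.2 q hq p hp hqp).1 hwq.1, fun hw₁ => ?_⟩)
    exact hwq.2 ((hL.2 p hp q hq hqp.symm).1 hw₁)

end IsIndepCollection

section Wedge

variable {V : Type} {Z : Set V} {k : ℕ}

def wedgeProj : ↥Z ⊕ (↥(Zᶜ) × Fin k) → V :=
  Sum.elim (↑) fun x => ↑x.1

theorem wedge_adj_wedgeProj {H : SimpleGraph V} {a b : ↥Z ⊕ (↥(Zᶜ) × Fin k)}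
    (hab : (wedge H Z k).Adj a b) : H.Adj (wedgeProj a) (wedgeProj b) := by
  rw [wedge, SimpleGraph.fromRel_adj] at hab
  rcases hab.2 with h | h <;> rcases a with z | ⟨v, i⟩ <;> rcases b with z' | ⟨w, j⟩ <;>
    first | exact h | exact h.symm | exact h.2 | exact h.2.symm

theorem wedge_adj_inr_inr {H : SimpleGraph V} {v w : ↥(Zᶜ)} {i j : Fin k}
    (h : (wedge H Z k).Adj (Sum.inr (v, i)) (Sum.inr (w, j))) : i = j := by
  rw [wedge, SimpleGraph.fromRel_adj] at h
  rcases h.2 with h | h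
  exacts [h.1, h.1.symm]

theorem wedgeProj_injOn {s : Set (↥Z ⊕ (↥(Zᶜ) × Fin k))}
    (hs : ∀ v i j, Sum.inr (v, i) ∈ s → Sum.inr (v, j) ∈ s → i = j) : Set.InjOn wedgeProj s := by
  rintro (z | ⟨v, i⟩) ha (z' | ⟨w, j⟩) hb h
  · exact congrArg Sum.inl (Subtype.ext h)
  · change (z : V) = w at h
    exact absurd (h ▸ z.2) w.2
  · change (v : V) = z' at h
    exact absurd (h ▸ z'.2) v.2
  · obtain rfl : v = w := Subtype.ext h
    rw [hs v i j ha hb]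

end Wedge

section CliqueWedge

variable {V : Type} {H : SimpleGraph V} {L : Set (Set V × Set V)} {k : ℕ}

-- Since `A ∩ B ⊆ interB L` for `(A, B) ∈ L`, the added edges join central vertices only.
def cliqueWedge (H : SimpleGraph V) (L : Set (Set V × Set V)) (k : ℕ) :
    SimpleGraph (↥(interB L) ⊕ (↥((interB L)ᶜ) × Fin k)) where
  Adj a b := (wedgeC H L k).Adj a b ∨
    (a ≠ b ∧ ∃ p ∈ L, wedgeProj a ∈ p.1 ∩ p.2 ∧ wedgeProj b ∈ p.1 ∩ p.2)
  symm.symm _ _ := Or.imp (fun h => h.symm) fun ⟨hab, p, hp, ha, hb⟩ => ⟨hab.symm, p, hp, hb, ha⟩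
  loopless.irrefl _ := by rintro (h | ⟨h, -⟩); exacts [h.ne rfl, h rfl]

theorem cliqueWedge_adj {a b : ↥(interB L) ⊕ (↥((interB L)ᶜ) × Fin k)}
    (hab : (cliqueWedge H L k).Adj a b) :
    H.Adj (wedgeProj a) (wedgeProj b) ∨
      ∃ p ∈ L, wedgeProj a ∈ p.1 ∩ p.2 ∧ wedgeProj b ∈ p.1 ∩ p.2 :=
  Or.imp wedge_adj_wedgeProj And.right hab

variable (L) in
def wedgePart (S : Finset ((Set V × Set V) × Fin k)) :
    Set (↥(interB L) ⊕ (↥((interB L)ᶜ) × Fin k)) :=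
  {ω | ω.elim (fun _ => True) fun x => ∃ p, (p, x.2) ∈ S ∧ ↑x.1 ∈ p.1 \ p.2}

variable (L k) in
def copyBlock (p : Set V × Set V) (i : Fin k) :
    Set (↥(interB L) ⊕ (↥((interB L)ᶜ) × Fin k)) :=
  {ω | ω.elim (fun z => ↑z ∈ p.1 ∩ p.2) fun x => x.2 = i ∧ ↑x.1 ∈ p.1 \ p.2}

theorem wedgePart_insert (S : Finset ((Set V × Set V) × Fin k)) (p : Set V × Set V)
    (i : Fin k) : wedgePart L (insert (p, i) S) = wedgePart L S ∪ copyBlock L k p i := by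
  ext (z | ⟨v, j⟩)
  · exact iff_of_true trivial (Or.inl trivial)
  · simp only [wedgePart, copyBlock, Set.mem_union, Set.mem_ofPred_eq, Sum.elim_inr,
      Finset.mem_insert, Prod.mk.injEq]
    constructor
    · rintro ⟨q, ⟨rfl, rfl⟩ | hq, hv⟩
      exacts [Or.inr ⟨rfl, hv⟩, Or.inl ⟨q, hq, hv⟩]
    · rintro (⟨q, hq, hv⟩ | ⟨rfl, hv⟩)
      exacts [⟨q, Or.inr hq, hv⟩, ⟨p, Or.inl ⟨rfl, rfl⟩, hv⟩]

theorem wedgeProj_mem_fst_of_mem_copyBlock {p : Set V × Set V} {i : Fin k}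
    {ω : ↥(interB L) ⊕ (↥((interB L)ᶜ) × Fin k)} (hω : ω ∈ copyBlock L k p i) :
    wedgeProj ω ∈ p.1 := by
  rcases ω with z | ⟨v, j⟩
  exacts [hω.1, hω.2.1]

theorem wedgeProj_injOn_copyBlock (p : Set V × Set V) (i : Fin k) :
    Set.InjOn wedgeProj (copyBlock L k p i) :=
  wedgeProj_injOn fun _ _ _ hi hj => hi.1.trans hj.1.symm

theorem IsIndepCollection.wedgeProj_mem_of_mem_wedgePart_inter_copyBlock
    (hL : IsIndepCollection H L) {S : Finset ((Set V × Set V) × Fin k)} (hS : ∀ x ∈ S, x.1 ∈ L)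
    {p : Set V × Set V} (hp : p ∈ L) {i : Fin k} (hpi : (p, i) ∉ S)
    {ω : ↥(interB L) ⊕ (↥((interB L)ᶜ) × Fin k)}
    (hω : ω ∈ wedgePart L S ∩ copyBlock L k p i) : wedgeProj ω ∈ p.1 ∩ p.2 := by
  rcases ω with z | ⟨v, j⟩
  · exact hω.2
  · obtain ⟨⟨q, hq, hvq⟩, rfl, hvp⟩ := hω
    obtain rfl := hL.eq_of_mem_diff (hS _ hq) hp hvq hvp
    exact absurd hq hpi

theorem IsIndepCollection.not_adj_cliqueWedge_of_mem_diff (hL : IsIndepCollection H L)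
    {S : Finset ((Set V × Set V) × Fin k)} {p : Set V × Set V} (hp : p ∈ L) (i : Fin k) :
    ∀ a ∈ wedgePart L S \ copyBlock L k p i, ∀ b ∈ copyBlock L k p i \ wedgePart L S,
      ¬ (cliqueWedge H L k).Adj a b := by
  rintro a ⟨-, ha⟩ (z | ⟨w, j⟩) ⟨hb, hbS⟩ hab
  · exact hbS trivial
  obtain ⟨rfl, hw⟩ := hb
  apply ha
  rcases hab with hab | ⟨-, q, hq, -, hwq⟩
  · rcases a with z | ⟨v, j⟩
    · have hz : (z : V) ∈ p.2 := interB_subset_snd hp z.2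
      exact ⟨(hL.1 p hp).1.mem_fst_of_adj hz hw (wedge_adj_wedgeProj hab), hz⟩
    · exact ⟨wedge_adj_inr_inr hab, hL.mem_diff_of_adj hp hw v.2 (wedge_adj_wedgeProj hab).symm⟩
  · exact absurd (hL.mem_interB hq hwq) w.2

theorem IsIndepCollection.ncard_wedgePart_inter_copyBlock_le [Finite V]
    (hL : IsIndepCollection H L) {S : Finset ((Set V × Set V) × Fin k)} (hS : ∀ x ∈ S, x.1 ∈ L)
    {p : Set V × Set V} (hp : p ∈ L) {i : Fin k} (hpi : (p, i) ∉ S) :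
    (wedgePart L S ∩ copyBlock L k p i).ncard ≤ (p.1 ∩ p.2).ncard :=
  Set.ncard_le_ncard_of_injOn wedgeProj
    (fun _ hω => hL.wedgeProj_mem_of_mem_wedgePart_inter_copyBlock hS hp hpi hω)
    ((wedgeProj_injOn_copyBlock p i).mono Set.inter_subset_right)

theorem torsoOn_subgraphOf_induce {s C : Set (↥(interB L) ⊕ (↥((interB L)ᶜ) × Fin k))}
    {p : Set V × Set V} (hp : p ∈ L) (hC : ∀ ω ∈ C, wedgeProj ω ∈ p.1 ∩ p.2) :
    SubgraphOf ((cliqueWedge H L k).torsoOn s C) ((cliqueWedge H L k).induce s) :=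
  ⟨id, injective_id, fun _ _ hxy => hxy.elim id fun ⟨hne, hx, hy⟩ =>
    Or.inr ⟨fun h => hne (Subtype.ext h), p, hp, hC _ hx, hC _ hy⟩⟩

theorem IsIndepCollection.torsoOn_copyBlock_subgraphOf_periTorso (hL : IsIndepCollection H L)
    {p : Set V × Set V} (hp : p ∈ L) (i : Fin k)
    {C : Set (↥(interB L) ⊕ (↥((interB L)ᶜ) × Fin k))}
    (hC : ∀ ω ∈ C, wedgeProj ω ∈ p.1 ∩ p.2) :
    SubgraphOf ((cliqueWedge H L k).torsoOn (copyBlock L k p i) C) (periTorso H p.1 p.2) := by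
  let f : ↥(copyBlock L k p i) → ↥p.1 :=
    fun ω => ⟨wedgeProj ω.1, wedgeProj_mem_fst_of_mem_copyBlock ω.2⟩
  have hf : Injective f := fun x y h =>
    Subtype.ext (wedgeProj_injOn_copyBlock p i x.2 y.2 (congrArg Subtype.val h))
  refine ⟨f, hf, fun x y hxy => (SimpleGraph.fromRel_adj _ _ _).mpr ⟨hf.ne hxy.ne, Or.inl ?_⟩⟩
  rcases hxy with (hxy | ⟨-, q, hq, hxq, hyq⟩) | ⟨-, hx, hy⟩
  · exact Or.inl (wedge_adj_wedgeProj hxy)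
  · exact Or.inr
      ⟨⟨(f x).2, interB_subset_snd hp (hL.mem_interB hq hxq)⟩,
        ⟨(f y).2, interB_subset_snd hp (hL.mem_interB hq hyq)⟩⟩
  · exact Or.inr ⟨hC _ hx, hC _ hy⟩

theorem inr_notMem_wedgePart_empty (x : ↥((interB L)ᶜ) × Fin k) :
    Sum.inr x ∉ wedgePart L (∅ : Finset ((Set V × Set V) × Fin k)) :=
  fun ⟨_, hq, _⟩ => Finset.notMem_empty _ hq

theorem induce_wedgePart_empty_subgraphOf_centralTorso :
    SubgraphOf ((cliqueWedge H L k).induce (wedgePart L ∅)) (centralTorso H L) := by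
  have hmem : ∀ ω ∈ wedgePart L (∅ : Finset ((Set V × Set V) × Fin k)),
      wedgeProj ω ∈ interB L := by
    rintro (z | x) hω
    exacts [z.2, absurd hω (inr_notMem_wedgePart_empty x)]
  let f : ↥(wedgePart L ∅) → ↥(interB L) := fun ω => ⟨wedgeProj ω.1, hmem _ ω.2⟩
  have hf : Injective f := fun x y h =>
    Subtype.ext (wedgeProj_injOn (fun _ _ _ hi _ => absurd hi (inr_notMem_wedgePart_empty _))
      x.2 y.2 (congrArg Subtype.val h))
  exact ⟨f, hf, fun x y hxy =>
    (SimpleGraph.fromRel_adj _ _ _).mpr ⟨hf.ne hxy.ne, Or.inl (cliqueWedge_adj hxy)⟩⟩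

theorem IsIndepCollection.mem_wedgePart (hL : IsIndepCollection H L)
    {S : Finset ((Set V × Set V) × Fin k)} (hS : ∀ p ∈ L, ∀ i, (p, i) ∈ S)
    (ω : ↥(interB L) ⊕ (↥((interB L)ᶜ) × Fin k)) : ω ∈ wedgePart L S := by
  rcases ω with z | ⟨v, i⟩
  · trivial
  · obtain ⟨p, hp, hvp⟩ := hL.exists_mem_diff v.2
    exact ⟨p, hS p hp i, hvp⟩

end CliqueWedge

section Duplication

variable {𝒢 : GraphClass} {t : ℕ} {V : Type} [Finite V] {H : SimpleGraph V}
  {L : Set (Set V × Set V)}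

theorem induce_wedgePart_mem (h𝒢 : MonotoneClass 𝒢) (hsum : ClosedUnderCliqueSums 𝒢 t)
    (hL : IsIndepCollection H L) (hord : ∀ p ∈ L, (p.1 ∩ p.2).ncard ≤ t)
    (hcentral : 𝒢 _ (centralTorso H L)) (hperi : ∀ p ∈ L, 𝒢 _ (periTorso H p.1 p.2)) {k : ℕ}
    (S : Finset ((Set V × Set V) × Fin k)) (hS : ∀ x ∈ S, x.1 ∈ L) :
    𝒢 _ ((cliqueWedge H L k).induce (wedgePart L S)) := by
  induction S using Finset.induction_on with
  | empty => exact h𝒢.mem_of_subgraphOf induce_wedgePart_empty_subgraphOf_centralTorso hcentral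
  | @insert x S hx ih =>
    obtain ⟨p, i⟩ := x
    have hp : p ∈ L := hS _ (Finset.mem_insert_self _ _)
    have hS' : ∀ y ∈ S, y.1 ∈ L := fun y hy => hS y (Finset.mem_insert_of_mem hy)
    have hC : ∀ ω ∈ wedgePart L S ∩ copyBlock L k p i, wedgeProj ω ∈ p.1 ∩ p.2 :=
      fun _ => hL.wedgeProj_mem_of_mem_wedgePart_inter_copyBlock hS' hp hx
    rw [wedgePart_insert]
    exact hsum.induce_union_mem
      ((hL.ncard_wedgePart_inter_copyBlock_le hS' hp hx).trans (hord p hp))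
      (hL.not_adj_cliqueWedge_of_mem_diff hp i)
      (h𝒢.mem_of_subgraphOf (torsoOn_subgraphOf_induce hp hC) (ih hS'))
      (h𝒢.mem_of_subgraphOf (hL.torsoOn_copyBlock_subgraphOf_periTorso hp i hC) (hperi p hp))

theorem wedgeC_mem (h𝒢 : MonotoneClass 𝒢) (hsum : ClosedUnderCliqueSums 𝒢 t)
    (hL : IsIndepCollection H L) (hord : ∀ p ∈ L, (p.1 ∩ p.2).ncard ≤ t)
    (hcentral : 𝒢 _ (centralTorso H L)) (hperi : ∀ p ∈ L, 𝒢 _ (periTorso H p.1 p.2)) (k : ℕ) :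
    𝒢 _ (wedgeC H L k) := by
  let S : Finset ((Set V × Set V) × Fin k) := (Set.toFinite L).toFinset ×ˢ Finset.univ
  have hS : ∀ x ∈ S, x.1 ∈ L := fun _ hx =>
    (Set.toFinite L).mem_toFinset.mp (Finset.mem_product.mp hx).1
  have hall : ∀ p ∈ L, ∀ i, (p, i) ∈ S := fun p hp i =>
    Finset.mem_product.mpr ⟨(Set.toFinite L).mem_toFinset.mpr hp, Finset.mem_univ i⟩
  exact h𝒢.mem_of_subgraphOf
    ⟨fun ω => ⟨ω, hL.mem_wedgePart hall ω⟩, fun _ _ h => congrArg Subtype.val h,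
      fun _ _ h => Or.inl h⟩
    (induce_wedgePart_mem h𝒢 hsum hL hord hcentral hperi S hS)

end Duplication

/-- Let `𝒢` be a monotone class of graphs closed under `(≤ t)`-sums, `H` a graph, and `L` an
independent collection of separations of `H` each of order at most `t`.  If every torso of
`L` belongs to `𝒢`, then `L` is `𝒢`-duplicable. -/
theorem stmt12 (𝒢 : GraphClass) (h𝒢 : MonotoneClass 𝒢) (t : ℕ)
    (hsum : ∀ (Wt W₁ W₂ : Type) [Fintype Wt] [Fintype W₁] [Fintype W₂]
        (G : SimpleGraph Wt) (G₁ : SimpleGraph W₁) (G₂ : SimpleGraph W₂),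
        𝒢 W₁ G₁ → 𝒢 W₂ G₂ → IsCliqueSumLE t G G₁ G₂ → 𝒢 Wt G)
    {V : Type} [Fintype V] (H : SimpleGraph V)
    (L : Set (Set V × Set V)) (hL : IsIndepCollection H L)
    (hord : ∀ p ∈ L, (p.1 ∩ p.2).ncard ≤ t)
    (hcentral : 𝒢 _ (centralTorso H L))
    (hperi : ∀ p ∈ L, 𝒢 _ (periTorso H p.1 p.2)) :
    Duplicable 𝒢 H L :=
  (Set.Ioi_infinite 0).mono fun k hk => ⟨hk, wedgeC_mem h𝒢 hsum hL hord hcentral hperi k⟩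
end

section
/- Let G be a topological-minor-closed class of graphs, H a graph, and L an essential G-duplicable independent collection of separations of H. Then every torso of L belongs to G. -/
/-- `H` is a topological minor of `G`: some subgraph of `G` is isomorphic to a subdivision
of `H`. -/
def IsTopMinor {V W : Type} (H : SimpleGraph V) (G : SimpleGraph W) : Prop :=
  ∃ (f : V → W) (p : ∀ ⦃u v : V⦄, H.Adj u v → G.Walk (f u) (f v)),
    Function.Injective f ∧
    (∀ ⦃u v⦄ (h : H.Adj u v), (p h).IsPath) ∧
    (∀ ⦃u v⦄ (h : H.Adj u v) (x : W), x ∈ (p h).support → x ≠ f u → x ≠ f v →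
      (∀ z, f z ≠ x) ∧
      ∀ ⦃u' v'⦄ (h' : H.Adj u' v'), x ∈ (p h').support → s(u, v) = s(u', v'))

/-! Write `Z = ⋂_{(A,B) ∈ L} B` and pick `k > |Sym2 V| + 1` with `H ∧_k L ∈ 𝒢`. Independence puts
every adhesion set `A ∩ B` inside `Z`, while `A \ B` lies outside `Z` and is therefore duplicated.
One copy of `H` carries `H` itself, and each pair `s` of vertices gets a further private copy, through
which the clique edge `s = ab` on `A ∩ B` is subdivided as `a`, a neighbour of `a` in `A \ B`, a path
in the connected graph `H[A \ B]`, a neighbour of `b` in `A \ B`, `b`. So `H` with all adhesion sets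
made cliques is a topological minor of `H ∧_k L`, and every torso is a subgraph of that graph. -/

open SimpleGraph

section Wedge

variable {V : Type} {H : SimpleGraph V} {Z : Set V} {k : ℕ}

open Classical in
noncomputable def wedgeVertex (Z : Set V) (i : Fin k) (v : V) : ↥Z ⊕ (↥Zᶜ × Fin k) :=
  if h : v ∈ Z then Sum.inl ⟨v, h⟩ else Sum.inr (⟨v, h⟩, i)

lemma wedgeVertex_of_mem {i : Fin k} {v : V} (h : v ∈ Z) :
    wedgeVertex Z i v = Sum.inl ⟨v, h⟩ :=
  dif_pos h

lemma wedgeVertex_of_notMem {i : Fin k} {v : V} (h : v ∉ Z) :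
    wedgeVertex Z i v = Sum.inr (⟨v, h⟩, i) :=
  dif_neg h

lemma wedgeVertex_congr_of_mem {v : V} (h : v ∈ Z) (i j : Fin k) :
    wedgeVertex Z i v = wedgeVertex Z j v := by
  rw [wedgeVertex_of_mem h, wedgeVertex_of_mem h]

lemma wedgeVertex_injective (i : Fin k) : Function.Injective (wedgeVertex Z i) := by
  intro u v huv
  by_cases hu : u ∈ Z <;> by_cases hv : v ∈ Z <;>
    simp_all [wedgeVertex_of_mem, wedgeVertex_of_notMem]

lemma wedge_adj_wedgeVertex (i : Fin k) {u v : V} (huv : H.Adj u v) :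
    (wedge H Z k).Adj (wedgeVertex Z i u) (wedgeVertex Z i v) := by
  refine (fromRel_adj _ _ _).mpr ⟨(wedgeVertex_injective i).ne huv.ne, Or.inl ?_⟩
  by_cases hu : u ∈ Z <;> by_cases hv : v ∈ Z <;>
    simpa [wedgeVertex_of_mem, wedgeVertex_of_notMem, hu, hv, wedgeRel] using huv

variable (H Z) in
noncomputable def wedgeCopy (i : Fin k) : H →g wedge H Z k where
  toFun := wedgeVertex Z i
  map_rel' := wedge_adj_wedgeVertex i

end Wedge

section Walks

variable {V : Type} {H : SimpleGraph V}

lemma exists_walk_support_subset_diff {A B : Set V}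
    (hnbr : ∀ v ∈ A ∩ B, ∃ u ∈ A \ B, H.Adj v u) (hconn : (H.induce (A \ B)).Connected)
    {a b : V} (ha : a ∈ A ∩ B) (hb : b ∈ A ∩ B) :
    ∃ W : H.Walk a b, ∀ x ∈ W.support, x = a ∨ x = b ∨ x ∈ A \ B := by
  obtain ⟨ua, hua, haua⟩ := hnbr a ha
  obtain ⟨ub, hub, hbub⟩ := hnbr b hb
  obtain ⟨W₀⟩ := hconn.preconnected ⟨ua, hua⟩ ⟨ub, hub⟩
  obtain ⟨W₁, hW₁⟩ : ∃ W₁ : H.Walk ua ub, W₁.support = W₀.support.map Subtype.val :=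
    ⟨W₀.map (Embedding.induce (A \ B)).toHom, Walk.support_map _ _⟩
  refine ⟨.cons haua (W₁.concat hbub.symm), fun x hx => ?_⟩
  rw [Walk.support_cons, Walk.support_concat] at hx
  simp only [List.mem_cons, List.mem_append, List.not_mem_nil, or_false] at hx
  rcases hx with rfl | hx | rfl
  · exact .inl rfl
  · rw [hW₁] at hx
    obtain ⟨y, -, rfl⟩ := List.mem_map.mp hx
    exact .inr (.inr y.2)
  · exact .inr (.inl rfl)

end Walks

lemma SimpleGraph.Adj.eq_or_eq_of_mem_support_toWalk {V : Type} {G : SimpleGraph V} {a b x : V}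
    (h : G.Adj a b) (hx : x ∈ h.toWalk.support) : x = a ∨ x = b := by
  simpa [Adj.support_toWalk] using hx

lemma isTopMinor_of_walks {V W : Type} {T : SimpleGraph V} {G : SimpleGraph W}
    (f : V → W) (hf : Function.Injective f) (R : Sym2 V → Set W)
    (hR : ∀ s t x, x ∈ R s → x ∈ R t → s = t) (hRf : ∀ s x, x ∈ R s → ∀ z, f z ≠ x)
    (hwalk : ∀ u v, T.Adj u v → ∃ p : G.Walk (f u) (f v),
      ∀ x ∈ p.support, x = f u ∨ x = f v ∨ x ∈ R s(u, v)) :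
    IsTopMinor T G := by
  classical
  choose p hp using hwalk
  have hsupp : ∀ ⦃u v⦄ (h : T.Adj u v), ∀ x ∈ (p u v h).bypass.support,
      x = f u ∨ x = f v ∨ x ∈ R s(u, v) :=
    fun u v h x hx => hp u v h x (Walk.support_bypass_subset_support _ hx)
  refine ⟨f, fun u v h => (p u v h).bypass, hf, fun u v h => Walk.bypass_isPath _,
    fun u v h x hx hxu hxv => ?_⟩
  have hxR : x ∈ R s(u, v) := (hsupp h x hx).resolve_left hxu |>.resolve_left hxv
  refine ⟨hRf _ x hxR, fun u' v' h' hx' => ?_⟩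
  rcases hsupp h' x hx' with rfl | rfl | hxR'
  · exact absurd rfl (hRf _ _ hxR u')
  · exact absurd rfl (hRf _ _ hxR v')
  · exact hR _ _ x hxR hxR'

lemma SubgraphOf.isTopMinor {V W : Type} {T : SimpleGraph V} {G : SimpleGraph W}
    (h : SubgraphOf T G) : IsTopMinor T G := by
  obtain ⟨f, hf, hadj⟩ := h
  refine isTopMinor_of_walks f hf (fun _ => ∅) (fun _ _ _ hx => hx.elim) (fun _ _ hx => hx.elim)
    fun u v huv => ⟨(hadj huv).toWalk, fun x hx =>
      (Adj.eq_or_eq_of_mem_support_toWalk _ hx).imp_right .inl⟩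

section Torso

variable {V : Type} {H : SimpleGraph V} {L : Set (Set V × Set V)} {p : Set V × Set V}
  {k : ℕ}

lemma inter_subset_interB (hL : IsIndepCollection H L) (hp : p ∈ L) :
    p.1 ∩ p.2 ⊆ interB L := by
  intro v hv
  refine Set.mem_iInter₂.mpr fun q hq => ?_
  by_cases hqp : q = p
  · exact hqp ▸ hv.2
  · exact (hL.2 p hp q hq (Ne.symm hqp)).1 hv.1

lemma diff_subset_compl_interB (hp : p ∈ L) : p.1 \ p.2 ⊆ (interB L)ᶜ :=
  fun _ hv hvZ => hv.2 (Set.mem_iInter₂.mp hvZ p hp)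

variable (H L) in
def cliqueCompletion : SimpleGraph V :=
  SimpleGraph.fromRel fun u v => H.Adj u v ∨ ∃ p ∈ L, u ∈ p.1 ∩ p.2 ∧ v ∈ p.1 ∩ p.2

lemma subgraphOf_centralTorso_cliqueCompletion :
    SubgraphOf (centralTorso H L) (cliqueCompletion H L) :=
  ⟨Subtype.val, Subtype.val_injective, fun _ _ h => ⟨Subtype.val_injective.ne h.1, h.2⟩⟩

lemma subgraphOf_periTorso_cliqueCompletion (hp : p ∈ L) :
    SubgraphOf (periTorso H p.1 p.2) (cliqueCompletion H L) := by
  refine ⟨Subtype.val, Subtype.val_injective, fun _ _ h => ⟨Subtype.val_injective.ne h.1, ?_⟩⟩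
  exact h.2.imp (.imp_right fun huv => ⟨p, hp, huv⟩) (.imp_right fun huv => ⟨p, hp, huv⟩)

lemma exists_wedge_walk_of_mem_inter (hL : IsIndepCollection H L)
    (hess : EssentialCollection H L) (hp : p ∈ L) {u v : V} (hu : u ∈ p.1 ∩ p.2)
    (hv : v ∈ p.1 ∩ p.2) (i j : Fin k) :
    ∃ W : (wedge H (interB L) k).Walk (wedgeVertex _ j u) (wedgeVertex _ j v),
      ∀ x ∈ W.support, x = wedgeVertex _ j u ∨ x = wedgeVertex _ j v ∨
        ∃ w, x = Sum.inr (w, i) := by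
  obtain ⟨W, hW⟩ := exists_walk_support_subset_diff (hess p hp).1 (hess p hp).2 hu hv
  have hu' := wedgeVertex_congr_of_mem (inter_subset_interB hL hp hu) i j
  have hv' := wedgeVertex_congr_of_mem (inter_subset_interB hL hp hv) i j
  obtain ⟨W', hW'⟩ : ∃ W' : (wedge H (interB L) k).Walk (wedgeVertex _ i u) (wedgeVertex _ i v),
      W'.support = W.support.map (wedgeVertex _ i) :=
    ⟨W.map (wedgeCopy H _ i), Walk.support_map _ _⟩
  refine ⟨W'.copy hu' hv', fun x hx => ?_⟩
  rw [Walk.support_copy, hW'] at hx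
  obtain ⟨y, hy, rfl⟩ := List.mem_map.mp hx
  rcases hW y hy with rfl | rfl | hyd
  · exact .inl hu'
  · exact .inr (.inl hv')
  · exact .inr (.inr ⟨_, wedgeVertex_of_notMem (diff_subset_compl_interB hp hyd)⟩)

theorem isTopMinor_cliqueCompletion_wedgeC (hL : IsIndepCollection H L)
    (hess : EssentialCollection H L) (c : Option (Sym2 V) ↪ Fin k) :
    IsTopMinor (cliqueCompletion H L) (wedgeC H L k) := by
  unfold wedgeC
  refine isTopMinor_of_walks (wedgeVertex _ (c none)) (wedgeVertex_injective _)
    (fun s => {x | ∃ w, x = Sum.inr (w, c (some s))}) ?_ ?_ ?_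
  · rintro s t _ ⟨w, rfl⟩ ⟨w', h⟩
    simp only [Sum.inr.injEq, Prod.mk.injEq, EmbeddingLike.apply_eq_iff_eq,
      Option.some.injEq] at h
    exact h.2
  · rintro s _ ⟨w, rfl⟩ z hz
    by_cases hzZ : z ∈ interB L
    · simp [wedgeVertex_of_mem hzZ] at hz
    · simp [wedgeVertex_of_notMem hzZ] at hz
  · intro u v huv
    rcases ((fromRel_adj _ _ _).mp huv).2 with (hH | ⟨p, hp, hu, hv⟩) | (hH | ⟨p, hp, hv, hu⟩)
    · exact ⟨(wedge_adj_wedgeVertex (c none) hH).toWalk, fun x hx =>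
        (Adj.eq_or_eq_of_mem_support_toWalk _ hx).imp_right .inl⟩
    · exact exists_wedge_walk_of_mem_inter hL hess hp hu hv _ _
    · exact ⟨(wedge_adj_wedgeVertex (c none) hH.symm).toWalk, fun x hx =>
        (Adj.eq_or_eq_of_mem_support_toWalk _ hx).imp_right .inl⟩
    · exact exists_wedge_walk_of_mem_inter hL hess hp hu hv _ _

end Torso

/-- Let `𝒢` be a topological-minor-closed class of graphs, `H` a graph, and `L` an essential
`𝒢`-duplicable independent collection of separations of `H`.  Then every torso of `L`
belongs to `𝒢`. -/
theorem stmt13 (𝒢 : GraphClass)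
    (hclosed : ∀ (V W : Type) [Fintype V] [Fintype W] (H : SimpleGraph V)
        (G : SimpleGraph W), IsTopMinor H G → 𝒢 W G → 𝒢 V H)
    {V : Type} [Fintype V] (H : SimpleGraph V)
    (L : Set (Set V × Set V)) (hL : IsIndepCollection H L)
    (hess : EssentialCollection H L) (hdup : Duplicable 𝒢 H L) :
    𝒢 _ (centralTorso H L) ∧ ∀ p ∈ L, 𝒢 _ (periTorso H p.1 p.2) := by
  classical
  obtain ⟨k, ⟨-, hwedge⟩, hk⟩ := hdup.exists_gt (Fintype.card (Option (Sym2 V)))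
  obtain ⟨c⟩ : Nonempty (Option (Sym2 V) ↪ Fin k) :=
    Function.Embedding.nonempty_of_card_le (by simpa using hk.le)
  have hcompletion : 𝒢 V (cliqueCompletion H L) :=
    hclosed _ _ _ _ (isTopMinor_cliqueCompletion_wedgeC hL hess c) hwedge
  exact ⟨hclosed _ _ _ _ subgraphOf_centralTorso_cliqueCompletion.isTopMinor hcompletion,
    fun p hp => hclosed _ _ _ _ (subgraphOf_periTorso_cliqueCompletion hp).isTopMinor hcompletion⟩
end

section
/- Let H be a graph and G a graph obtained as H ∧_k C for an independent collection C of separations of H and a positive integer k. Then G contains at least k^{|C|} induced subgraphs isomorphic to H, and k^{|C|} ≥ (|V(G)|/|V(H)|)^{|C|} ≥ |V(G)|^{|C|} / |V(H)|^{α(H)}. -/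
noncomputable def indepNum {V : Type} (G : SimpleGraph V) : ℕ :=
  sSup {n | ∃ s : Set V, s.Pairwise (fun u v => ¬ G.Adj u v) ∧ s.ncard = n}

section Aux

open scoped Classical

variable {V : Type} {H : SimpleGraph V} {C : Set (Set V × Set V)}

lemma sep_exists {v : V} (h : v ∉ interB C) : ∃ p, p ∈ C ∧ v ∉ p.2 := by
  simp only [interB, Set.mem_iInter] at h
  push_neg at h
  exact h

noncomputable def sepOf (C : Set (Set V × Set V)) {v : V} (h : v ∉ interB C) :
    Set V × Set V :=
  (sep_exists h).choose

lemma sepOf_mem {v : V} (h : v ∉ interB C) : sepOf C h ∈ C :=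
  (sep_exists h).choose_spec.1

lemma sepOf_not {v : V} (h : v ∉ interB C) : v ∉ (sepOf C h).2 :=
  (sep_exists h).choose_spec.2

lemma mem_fst {p : Set V × Set V} (hsep : p.1 ∪ p.2 = Set.univ) {v : V} (h : v ∉ p.2) :
    v ∈ p.1 := by
  have := Set.mem_univ v
  rw [← hsep] at this
  rcases this with h' | h'
  · exact h'
  · exact absurd h' h

lemma sepOf_mem_fst (hC : IsIndepCollection H C) {v : V} (h : v ∉ interB C) :
    v ∈ (sepOf C h).1 :=
  mem_fst (hC.1 _ (sepOf_mem h)).1.1 (sepOf_not h)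

lemma sep_unique (hC : IsIndepCollection H C) {v : V} {p q : Set V × Set V}
    (hp : p ∈ C) (hq : q ∈ C) (hvp : v ∉ p.2) (hvq : v ∉ q.2) : p = q := by
  by_contra hne
  exact hvq ((hC.2 p hp q hq hne).1 (mem_fst (hC.1 p hp).1.1 hvp))

lemma sep_eq_of_adj (hC : IsIndepCollection H C) {v w : V}
    (hv : v ∉ interB C) (hw : w ∉ interB C) (hadj : H.Adj v w) :
    sepOf C hv = sepOf C hw := by
  by_contra hne
  have hp := sepOf_mem hv
  have hq := sepOf_mem hw
  have h1 : (sepOf C hv).1 ⊆ (sepOf C hw).2 := (hC.2 _ hp _ hq hne).1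
  have h2 : (sepOf C hw).1 ⊆ (sepOf C hv).2 := (hC.2 _ hp _ hq hne).2
  have hw1 : w ∈ (sepOf C hv).2 \ (sepOf C hv).1 :=
    ⟨h2 (sepOf_mem_fst hC hw), fun hw1 => sepOf_not hw (h1 hw1)⟩
  exact (hC.1 _ hp).1.2 v ⟨sepOf_mem_fst hC hv, sepOf_not hv⟩ w hw1 hadj

variable (C) in
noncomputable def wmap (k : ℕ) (f : ↥C → Fin k) (v : V) :
    ↥(interB C) ⊕ (↥((interB C)ᶜ) × Fin k) :=
  if h : v ∈ interB C then Sum.inl ⟨v, h⟩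
  else Sum.inr (⟨v, h⟩, f ⟨sepOf C h, sepOf_mem h⟩)

lemma wmap_inj (k : ℕ) (f : ↥C → Fin k) : Function.Injective (wmap C k f) := by
  intro a b hab
  unfold wmap at hab
  by_cases ha : a ∈ interB C
  · by_cases hb : b ∈ interB C
    · rw [dif_pos ha, dif_pos hb] at hab
      simpa using hab
    · rw [dif_pos ha, dif_neg hb] at hab
      simp at hab
  · by_cases hb : b ∈ interB C
    · rw [dif_neg ha, dif_pos hb] at hab
      simp at hab
    · rw [dif_neg ha, dif_neg hb] at hab
      simp only [Sum.inr.injEq, Prod.mk.injEq, Subtype.mk.injEq] at hab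
      exact hab.1

lemma wmap_adj (hC : IsIndepCollection H C) (k : ℕ) (f : ↥C → Fin k) (v w : V) :
    (wedgeC H C k).Adj (wmap C k f v) (wmap C k f w) ↔ H.Adj v w := by
  unfold wedgeC wedge wmap
  rw [SimpleGraph.fromRel_adj]
  by_cases hv : v ∈ interB C
  · by_cases hw : w ∈ interB C
    · rw [dif_pos hv, dif_pos hw]
      simp only [wedgeRel]
      constructor
      · rintro ⟨-, h | h⟩
        · exact h
        · exact h.symm
      · intro h
        exact ⟨by simp [Subtype.ext_iff]; exact h.ne, Or.inl h⟩
    · rw [dif_pos hv, dif_neg hw]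
      simp only [wedgeRel]
      constructor
      · rintro ⟨-, h | h⟩
        · exact h
        · exact h.symm
      · intro h
        exact ⟨by simp, Or.inl h⟩
  · by_cases hw : w ∈ interB C
    · rw [dif_neg hv, dif_pos hw]
      simp only [wedgeRel]
      constructor
      · rintro ⟨-, h | h⟩
        · exact h
        · exact h.symm
      · intro h
        exact ⟨by simp, Or.inl h⟩
    · rw [dif_neg hv, dif_neg hw]
      simp only [wedgeRel]
      constructor
      · rintro ⟨-, ⟨-, h⟩ | ⟨-, h⟩⟩
        · exact h
        · exact h.symm
      · intro h
        refine ⟨?_, Or.inl ⟨congrArg f (Subtype.ext (sep_eq_of_adj hC hv hw h)), h⟩⟩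
        simp only [ne_eq, Sum.inr.injEq, Prod.mk.injEq, Subtype.mk.injEq, not_and]
        intro he
        exact absurd he h.ne

lemma card_le_indep [Fintype V] (hC : IsIndepCollection H C) :
    C.ncard ≤ indepNum H := by
  have hchoice : ∀ p : ↥C, ∃ v : V, v ∈ (p : Set V × Set V).1 \ (p : Set V × Set V).2 :=
    fun p => (hC.1 p p.2).2
  choose g hg using hchoice
  have hginj : Function.Injective g := by
    intro p q hpq
    by_contra hne
    have h1 : (p : Set V × Set V).1 ⊆ (q : Set V × Set V).2 :=
      (hC.2 p p.2 q q.2 (fun h => hne (Subtype.ext h))).1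
    exact (hg q).2 (hpq ▸ h1 (hg p).1)
  have hpair : (Set.range g).Pairwise (fun u v => ¬ H.Adj u v) := by
    rintro - ⟨p, rfl⟩ - ⟨q, rfl⟩ hne
    have hpq : (p : Set V × Set V) ≠ q := fun h => hne (congrArg g (Subtype.ext h))
    have h1 : (p : Set V × Set V).1 ⊆ (q : Set V × Set V).2 := (hC.2 p p.2 q q.2 hpq).1
    have h2 : (q : Set V × Set V).1 ⊆ (p : Set V × Set V).2 := (hC.2 p p.2 q q.2 hpq).2
    exact (hC.1 p p.2).1.2 (g p) (hg p) (g q) ⟨h2 (hg q).1, fun h => (hg q).2 (h1 h)⟩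
  have hcard : (Set.range g).ncard = C.ncard := by
    rw [← Nat.card_coe_set_eq, ← Nat.card_coe_set_eq]
    exact Nat.card_range_of_injective hginj
  have hmem : C.ncard ∈ {n | ∃ s : Set V, s.Pairwise (fun u v => ¬ H.Adj u v) ∧ s.ncard = n} :=
    ⟨Set.range g, hpair, hcard⟩
  refine le_csSup ⟨Nat.card V, ?_⟩ hmem
  rintro n ⟨s, -, rfl⟩
  rw [← Set.ncard_univ]
  exact Set.ncard_le_ncard (Set.subset_univ s) Set.finite_univ


noncomputable def wiso (hC : IsIndepCollection H C) (k : ℕ) (f : ↥C → Fin k) :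
    H ≃g (wedgeC H C k).induce (Set.range (wmap C k f)) where
  toEquiv := Equiv.ofInjective _ (wmap_inj k f)
  map_rel_iff' := by
    intro a b
    simp only [SimpleGraph.induce, SimpleGraph.comap_adj, Equiv.ofInjective_apply]
    exact wmap_adj hC k f a b

lemma wrange_inj (hC : IsIndepCollection H C) (k : ℕ) :
    Function.Injective (fun f : ↥C → Fin k => Set.range (wmap C k f)) := by
  intro f g hfg
  funext p
  by_contra hne
  obtain ⟨v, hv⟩ := (hC.1 p p.2).2
  have hvZ : v ∉ interB C := by
    intro h
    simp only [interB, Set.mem_iInter] at h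
    exact hv.2 (h p p.2)
  have hsepv : sepOf C hvZ = (p : Set V × Set V) :=
    sep_unique hC (sepOf_mem hvZ) p.2 (sepOf_not hvZ) hv.2
  have hfg' : Set.range (wmap C k f) = Set.range (wmap C k g) := hfg
  have hmem : wmap C k f v ∈ Set.range (wmap C k g) := hfg' ▸ Set.mem_range_self v
  obtain ⟨u, hu⟩ := hmem
  unfold wmap at hu
  rw [dif_neg hvZ] at hu
  by_cases huZ : u ∈ interB C
  · rw [dif_pos huZ] at hu
    simp at hu
  · rw [dif_neg huZ] at hu
    simp only [Sum.inr.injEq, Prod.mk.injEq, Subtype.mk.injEq] at hu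
    obtain ⟨huv, hval⟩ := hu
    subst huv
    have hsepu : sepOf C huZ = (p : Set V × Set V) :=
      sep_unique hC (sepOf_mem huZ) p.2 (sepOf_not huZ) hv.2
    have e1 : (⟨sepOf C huZ, sepOf_mem huZ⟩ : ↥C) = p := Subtype.ext hsepu
    have e2 : (⟨sepOf C hvZ, sepOf_mem hvZ⟩ : ↥C) = p := Subtype.ext hsepv
    simp only [e1, e2] at hval
    exact hne hval.symm

lemma count_ge [Fintype V] (hC : IsIndepCollection H C) (k : ℕ) :
    k ^ C.ncard ≤ Nat.card {s : Set (↥(interB C) ⊕ (↥((interB C)ᶜ) × Fin k)) //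
      Nonempty (((wedgeC H C k).induce s) ≃g H)} := by
  have hinj : Function.Injective (fun f : ↥C → Fin k =>
      (⟨Set.range (wmap C k f), ⟨(wiso hC k f).symm⟩⟩ :
        {s : Set (↥(interB C) ⊕ (↥((interB C)ᶜ) × Fin k)) //
          Nonempty (((wedgeC H C k).induce s) ≃g H)})) := by
    intro f g h
    exact wrange_inj hC k (congrArg Subtype.val h)
  calc k ^ C.ncard = Nat.card (↥C → Fin k) := by
        rw [Nat.card_fun, Nat.card_eq_fintype_card (α := Fin k), Fintype.card_fin,
          Nat.card_coe_set_eq]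
    _ ≤ _ := Nat.card_le_card_of_injective _ hinj

end Aux

/-- Let `G = H ∧_k C` for an independent collection `C` of separations of `H` and a positive
integer `k`.  Then `G` contains at least `k^{|C|}` induced subgraphs isomorphic to `H`, and
`k^{|C|} ≥ (|V(G)|/|V(H)|)^{|C|} ≥ |V(G)|^{|C|} / |V(H)|^{α(H)}`. -/

theorem stmt17 {V : Type} [Fintype V] (H : SimpleGraph V) (C : Set (Set V × Set V))
    (hC : IsIndepCollection H C) (k : ℕ) (hk : 0 < k) :
    k ^ C.ncard ≤
        Nat.card {s : Set (↥(interB C) ⊕ (↥((interB C)ᶜ) × Fin k)) //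
          Nonempty (((wedgeC H C k).induce s) ≃g H)} ∧
    ((Nat.card (↥(interB C) ⊕ (↥((interB C)ᶜ) × Fin k)) : ℝ) / (Nat.card V : ℝ)) ^ C.ncard
        ≤ (k : ℝ) ^ C.ncard ∧
    (Nat.card (↥(interB C) ⊕ (↥((interB C)ᶜ) × Fin k)) : ℝ) ^ C.ncard
          / (Nat.card V : ℝ) ^ (indepNum H)
        ≤ ((Nat.card (↥(interB C) ⊕ (↥((interB C)ᶜ) × Fin k)) : ℝ)
            / (Nat.card V : ℝ)) ^ C.ncard := by
  set Z := interB C with hZ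
  have hn : Nat.card (↥Z ⊕ (↥(Zᶜ) × Fin k)) = Z.ncard + Zᶜ.ncard * k := by
    rw [Nat.card_sum, Nat.card_prod, Nat.card_coe_set_eq, Nat.card_coe_set_eq,
      Nat.card_eq_fintype_card (α := Fin k), Fintype.card_fin]
  have hnk : Nat.card (↥Z ⊕ (↥(Zᶜ) × Fin k)) ≤ k * Nat.card V := by
    rw [hn, ← Set.ncard_add_ncard_compl Z]
    calc Z.ncard + Zᶜ.ncard * k ≤ Z.ncard * k + Zᶜ.ncard * k := by
          exact Nat.add_le_add_right (Nat.le_mul_of_pos_right _ hk) _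
      _ = k * (Z.ncard + Zᶜ.ncard) := by ring
  refine ⟨count_ge hC k, ?_, ?_⟩
  · -- (n / |V|)^c ≤ k^c
    apply pow_le_pow_left₀ (by positivity)
    rcases eq_or_ne (Nat.card V) 0 with h0 | h0
    · rw [h0, Nat.cast_zero, div_zero]
      exact Nat.cast_nonneg k
    · rw [div_le_iff₀ (by positivity)]
      calc (Nat.card (↥Z ⊕ (↥(Zᶜ) × Fin k)) : ℝ) ≤ (k * Nat.card V : ℕ) := by
            exact_mod_cast hnk
        _ = (k : ℝ) * (Nat.card V : ℝ) := by push_cast; ring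
  · -- n^c / |V|^α ≤ n^c / |V|^c
    rw [div_pow]
    rcases eq_or_ne (Nat.card V) 0 with h0 | h0
    · -- V is empty
      have hVe : IsEmpty V := by
        rw [Nat.card_eq_fintype_card] at h0
        exact Fintype.card_eq_zero_iff.mp h0
      have hCe : C = ∅ := by
        ext p
        simp only [Set.mem_empty_iff_false, iff_false]
        intro hp
        obtain ⟨v, -⟩ := (hC.1 p hp).2
        exact hVe.false v
      rw [hCe]
      simp only [Set.ncard_empty, pow_zero, h0, Nat.cast_zero]
      rcases Nat.eq_zero_or_pos (indepNum H) with ha | ha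
      · simp [ha]
      · rw [zero_pow (Nat.pos_iff_ne_zero.mp ha)]
        simp
    · have hV1 : (1 : ℝ) ≤ (Nat.card V : ℝ) := by
        exact_mod_cast Nat.one_le_iff_ne_zero.mpr h0
      apply div_le_div_of_nonneg_left (by positivity) (by positivity)
      exact pow_le_pow_right₀ hV1 (card_le_indep hC)
end

section
/- Let d ≥ 0 be an integer and let D_d be the class of d-degenerate graphs. For every d-degenerate graph H there exist positive reals c₁, c₂ such that c₁·n^{α_d(H)} ≤ ex(H, D_d, n) ≤ c₂·n^{α_d(H)} for infinitely many (lower bound) and all (upper bound) positive integers n, where α_d(H) is the maximum size of an independent set of vertices of degree at most d in H. -/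
/-- The number of subgraphs of `G` isomorphic to `H`. -/
noncomputable def subCount {V W : Type} (H : SimpleGraph V) (G : SimpleGraph W) : ℕ :=
  Nat.card {G' : G.Subgraph // Nonempty (G'.coe ≃g H)}

/-!
Upper bound: order the vertices of `G` so that every vertex has at most `d` later neighbours. For a
copy `f` of `H` in `G`, the vertices whose image precedes the images of all their neighbours form an
independent set of vertices of degree at most `d`, so there are at most `α_d(H)` of them. Every
other vertex `v` has a neighbour `u` with `f u` before `f v`, so `f v` is one of the at most `d`
later neighbours of `f u`. Hence `f` is determined by the relative order of its values, its values
on the leading vertices and a code bounded in terms of `d` and `|V(H)|`.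

Lower bound: replacing every vertex of a maximum independent set `S` of vertices of degree at most
`d` by `k` twins keeps the graph `d`-degenerate and creates `k ^ |S|` copies of `H`. Adding `k`
isolated vertices makes the vertex counts pairwise distinct even when `S = ∅`.
-/

open Function Set SimpleGraph

section AlphaD

variable {V : Type} [Finite V] {d : ℕ} {H : SimpleGraph V}

lemma bddAbove_alphaD_set (d : ℕ) (H : SimpleGraph V) :
    BddAbove {n | ∃ s : Set V, s.Pairwise (fun u v => ¬ H.Adj u v) ∧
      (∀ v ∈ s, (H.neighborSet v).ncard ≤ d) ∧ s.ncard = n} :=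
  ⟨Nat.card V, by
    rintro _ ⟨s, -, -, rfl⟩
    exact (ncard_le_ncard (subset_univ s)).trans_eq (ncard_univ V)⟩

lemma ncard_le_alphaD {s : Set V} (hind : H.IsIndepSet s)
    (hdeg : ∀ v ∈ s, (H.neighborSet v).ncard ≤ d) : s.ncard ≤ alphaD d H :=
  le_csSup (bddAbove_alphaD_set d H) ⟨s, hind, hdeg, rfl⟩

lemma exists_ncard_eq_alphaD (d : ℕ) (H : SimpleGraph V) :
    ∃ s : Set V, H.IsIndepSet s ∧ (∀ v ∈ s, (H.neighborSet v).ncard ≤ d) ∧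
      s.ncard = alphaD d H :=
  Nat.sSup_mem (s := {n | ∃ s : Set V, s.Pairwise (fun u v => ¬ H.Adj u v) ∧
      (∀ v ∈ s, (H.neighborSet v).ncard ≤ d) ∧ s.ncard = n})
    ⟨0, ∅, by simp, by simp, by simp⟩ (bddAbove_alphaD_set d H)

end AlphaD

section DegeneracyOrder

variable {W : Type} {G : SimpleGraph W} {d : ℕ}

def forwardNeighborSet (G : SimpleGraph W) (ℓ : W → ℕ) (w : W) : Set W :=
  G.neighborSet w ∩ {x | ℓ w < ℓ x}

@[simp]
lemma mem_forwardNeighborSet {ℓ : W → ℕ} {w x : W} :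
    x ∈ forwardNeighborSet G ℓ w ↔ G.Adj w x ∧ ℓ w < ℓ x :=
  Iff.rfl

lemma forwardNeighborSet_subset (ℓ : W → ℕ) (w : W) :
    forwardNeighborSet G ℓ w ⊆ G.neighborSet w :=
  inter_subset_left

lemma Degenerate.exists_injOn_forward_le [Finite W] (hG : Degenerate d G) :
    ∀ n (s : Set W), s.ncard = n →
      ∃ ℓ : W → ℕ, InjOn ℓ s ∧ ∀ w ∈ s, (forwardNeighborSet G ℓ w ∩ s).ncard ≤ d
  | 0, s, hs => by simp [(ncard_eq_zero).1 hs]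
  | n + 1, s, hs => by
    classical
    obtain ⟨v, hvs, hv⟩ := hG s (nonempty_of_ncard_ne_zero (by omega))
    obtain ⟨ℓ, hinj, hℓ⟩ := hG.exists_injOn_forward_le n (s \ {v})
      (by rw [ncard_sdiff_singleton_of_mem hvs, hs]; rfl)
    -- `ℓ` is the elimination time: `v`, with few neighbours in `s`, goes first
    refine ⟨fun x => if x = v then 0 else ℓ x + 1, ?_, fun w hw => ?_⟩
    · intro x hx y hy hxy
      simp only at hxy
      split_ifs at hxy with hxv hyv hyv
      · exact hxv.trans hyv.symm
      · exact hinj ⟨hx, hxv⟩ ⟨hy, hyv⟩ (by omega)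
    by_cases hwv : w = v
    · subst hwv
      exact (ncard_le_ncard (inter_subset_inter_left _ (forwardNeighborSet_subset _ _))).trans
        hv
    refine (ncard_le_ncard ?_).trans (hℓ w ⟨hw, hwv⟩)
    rintro x ⟨hx, hxs⟩
    rw [mem_forwardNeighborSet, if_neg hwv] at hx
    obtain ⟨hxw, hlt⟩ := hx
    split_ifs at hlt with hxv
    · omega
    · exact ⟨mem_forwardNeighborSet.2 ⟨hxw, by omega⟩, hxs, hxv⟩

lemma Degenerate.exists_forward_order [Finite W] (hG : Degenerate d G) :
    ∃ ℓ : W → ℕ, Injective ℓ ∧ ∀ w, (forwardNeighborSet G ℓ w).ncard ≤ d := by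
  obtain ⟨ℓ, hinj, hℓ⟩ := hG.exists_injOn_forward_le _ univ rfl
  exact ⟨ℓ, injOn_univ.1 hinj, fun w => by simpa using hℓ w (mem_univ w)⟩

lemma injOn_ncard_inter_lt {ℓ : W → ℕ} (hℓ : Injective ℓ) {s : Set W} (hs : s.Finite) :
    InjOn (fun x => (s ∩ {y | ℓ y < ℓ x}).ncard) s := by
  have key : ∀ a ∈ s, ∀ b, ℓ a < ℓ b →
      (s ∩ {y | ℓ y < ℓ a}).ncard < (s ∩ {y | ℓ y < ℓ b}).ncard := fun a ha b hab =>
    ncard_lt_ncard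
      ⟨fun y hy => ⟨hy.1, hy.2.trans hab⟩, fun h => lt_irrefl (ℓ a) (h ⟨ha, hab⟩).2⟩
      (hs.inter_of_left _)
  intro a ha b hb h
  rcases lt_trichotomy (ℓ a) (ℓ b) with hab | hab | hab
  · exact absurd h (key a ha b hab).ne
  · exact hℓ hab
  · exact absurd h (key b hb a hab).ne'

end DegeneracyOrder

section OrderPattern

variable {V W : Type} {H : SimpleGraph V} {G : SimpleGraph W} {d : ℕ} {ℓ : W → ℕ}

instance SimpleGraph.Copy.finite [Finite V] [Finite W] : Finite (Copy H G) :=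
  Finite.of_injective _ DFunLike.coe_injective

def orderPattern (ℓ : W → ℕ) (f : Copy H G) : V → V → Prop := fun u v => ℓ (f u) < ℓ (f v)

def leadingSet (H : SimpleGraph V) (P : V → V → Prop) : Set V := {v | ∀ u, H.Adj v u → P v u}

lemma isIndepSet_leadingSet_orderPattern (f : Copy H G) :
    H.IsIndepSet (leadingSet H (orderPattern ℓ f)) :=
  fun u hu v hv _ huv => (hu v huv).asymm (hv u huv.symm)

lemma ncard_neighborSet_le_of_mem_leadingSet [Finite W]
    (hℓ : ∀ w, (forwardNeighborSet G ℓ w).ncard ≤ d) (f : Copy H G) {v : V}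
    (hv : v ∈ leadingSet H (orderPattern ℓ f)) : (H.neighborSet v).ncard ≤ d :=
  (ncard_le_ncard_of_injOn f (fun u hu => mem_forwardNeighborSet.2 ⟨f.toHom.map_adj hu, hv u hu⟩)
    f.injective.injOn).trans (hℓ (f v))

noncomputable def rankCode (ℓ : W → ℕ) (f : Copy H G) (v u : V) : ℕ :=
  (forwardNeighborSet G ℓ (f u) ∩ {x | ℓ x < ℓ (f v)}).ncard

lemma SimpleGraph.Copy.eq_of_orderPattern_eq [Finite W] (hℓ : Injective ℓ) {f g : Copy H G}
    (hP : orderPattern ℓ f = orderPattern ℓ g)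
    (hlead : ∀ v ∈ leadingSet H (orderPattern ℓ f), f v = g v)
    (hcode : rankCode ℓ f = rankCode ℓ g) : f = g := by
  suffices ∀ n v, ℓ (f v) = n → f v = g v from Copy.ext fun v => this _ v rfl
  intro n
  induction n using Nat.strong_induction_on with | _ n ih => ?_
  rintro v rfl
  by_cases hv : v ∈ leadingSet H (orderPattern ℓ f)
  · exact hlead v hv
  obtain ⟨u, hvu, hle⟩ : ∃ u, H.Adj v u ∧ ¬ ℓ (f v) < ℓ (f u) := by
    simpa [leadingSet, orderPattern] using hv
  have hlt : ℓ (f u) < ℓ (f v) :=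
    (not_lt.1 hle).lt_of_ne fun h => hvu.ne (f.injective (hℓ h)).symm
  have hu : f u = g u := ih _ hlt u rfl
  have hglt : ℓ (g u) < ℓ (g v) := (congrFun₂ hP u v).mp hlt
  have hf : f v ∈ forwardNeighborSet G ℓ (f u) := ⟨f.toHom.map_adj hvu.symm, hlt⟩
  have hg : g v ∈ forwardNeighborSet G ℓ (f u) := hu ▸ ⟨g.toHom.map_adj hvu.symm, hglt⟩
  refine injOn_ncard_inter_lt hℓ (toFinite _) hf hg ?_
  simpa [rankCode, hu] using congrFun₂ hcode v u

lemma card_orderPattern_fiber_le [Finite V] [Finite W] (hinj : Injective ℓ)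
    (hℓ : ∀ w, (forwardNeighborSet G ℓ w).ncard ≤ d) (P : V → V → Prop) :
    Nat.card {f : Copy H G // orderPattern ℓ f = P} ≤
      Nat.card W ^ alphaD d H * (d + 1) ^ (Nat.card V * Nat.card V) := by
  rcases isEmpty_or_nonempty {f : Copy H G // orderPattern ℓ f = P} with hP | ⟨⟨f₀, rfl⟩⟩
  · simp
  set L := leadingSet H (orderPattern ℓ f₀)
  let Φ : {f : Copy H G // orderPattern ℓ f = orderPattern ℓ f₀} →
      (L → W) × (V → V → Fin (d + 1)) := fun f =>
    (fun v => f.1 v, fun v u => ⟨rankCode ℓ f.1 v u,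
      Nat.lt_succ_of_le ((ncard_le_ncard inter_subset_left).trans (hℓ _))⟩)
  have hΦ : Injective Φ := fun f g h => Subtype.ext <|
    Copy.eq_of_orderPattern_eq hinj (f.2.trans g.2.symm)
      (fun v hv => congrFun (congrArg Prod.fst h) ⟨v, by simpa only [f.2] using hv⟩)
      (funext₂ fun v u => congrArg Fin.val (congrFun₂ (congrArg Prod.snd h) v u))
  have hpow : Nat.card W ^ L.ncard ≤ Nat.card W ^ alphaD d H := by
    rcases isEmpty_or_nonempty V with hV | hV
    · obtain ⟨s, -, -, hs⟩ := exists_ncard_eq_alphaD d H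
      simp [← hs, eq_empty_of_isEmpty]
    · have : Nonempty W := hV.map f₀
      exact Nat.pow_le_pow_right Nat.card_pos <| ncard_le_alphaD
        (isIndepSet_leadingSet_orderPattern f₀)
        fun _ hv => ncard_neighborSet_le_of_mem_leadingSet hℓ f₀ hv
  calc _ ≤ Nat.card ((L → W) × (V → V → Fin (d + 1))) := Nat.card_le_card_of_injective Φ hΦ
    _ = Nat.card W ^ L.ncard * (d + 1) ^ (Nat.card V * Nat.card V) := by
      simp [Nat.card_prod, Nat.card_fun, pow_mul]
    _ ≤ _ := Nat.mul_le_mul_right _ hpow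

theorem Degenerate.card_copy_le [Finite V] [Finite W] (hG : Degenerate d G) :
    Nat.card (Copy H G) ≤ Nat.card (V → V → Prop) *
      (Nat.card W ^ alphaD d H * (d + 1) ^ (Nat.card V * Nat.card V)) := by
  obtain ⟨ℓ, hinj, hℓ⟩ := hG.exists_forward_order
  have := Fintype.ofFinite (V → V → Prop)
  rw [← Nat.card_congr (Equiv.sigmaFiberEquiv (orderPattern (H := H) ℓ)), Nat.card_sigma,
    Nat.card_eq_fintype_card, ← smul_eq_mul]
  exact Finset.sum_le_card_nsmul _ _ _ fun P _ => card_orderPattern_fiber_le hinj hℓ P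

end OrderPattern

section CopyCount

variable {V W : Type} {H : SimpleGraph V} {G : SimpleGraph W}

lemma subCount_eq_card_range_toSubgraph (H : SimpleGraph V) (G : SimpleGraph W) :
    subCount H G = Nat.card (range (Copy.toSubgraph : Copy H G → G.Subgraph)) := by
  rw [Copy.range_toSubgraph]
  exact Nat.card_congr <| Equiv.subtypeEquivRight fun _ =>
    ⟨fun ⟨e⟩ => ⟨e.symm⟩, fun ⟨e⟩ => ⟨e.symm⟩⟩

lemma subCount_le_card_copy [Finite V] [Finite W] (H : SimpleGraph V) (G : SimpleGraph W) :
    subCount H G ≤ Nat.card (Copy H G) :=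
  (subCount_eq_card_range_toSubgraph H G).trans_le (Finite.card_range_le _)

lemma SimpleGraph.Copy.eq_of_toSubgraph_eq {f g : Copy H G} (h : f.toSubgraph = g.toSubgraph)
    (hfg : ∀ a a', f a = g a' → a = a') : f = g := by
  refine Copy.ext fun a => ?_
  obtain ⟨a', -, ha'⟩ : f a ∈ g.toSubgraph.verts := h ▸ ⟨a, trivial, rfl⟩
  rw [← ha', hfg a a' ha'.symm]
  rfl

lemma le_subCount_of_injective [Finite W] {ι : Type} {φ : ι → Copy H G}
    (hφ : Injective (Copy.toSubgraph ∘ φ)) : Nat.card ι ≤ subCount H G := by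
  rw [subCount_eq_card_range_toSubgraph]
  exact Nat.card_le_card_of_injective (fun i => ⟨_, mem_range_self (φ i)⟩)
    fun i j h => hφ (congrArg Subtype.val h)

end CopyCount

section Blowup

variable {V X : Type} {H : SimpleGraph V} {S : Set V} {d k : ℕ}

lemma degenerate_bot (d : ℕ) : Degenerate d (⊥ : SimpleGraph V) :=
  fun _ ⟨v, hv⟩ => ⟨v, hv, by simp⟩

lemma Degenerate.sum {G : SimpleGraph X} (hH : Degenerate d H) (hG : Degenerate d G) :
    Degenerate d (H ⊕g G) := by
  intro s hs
  by_cases hl : (Sum.inl ⁻¹' s).Nonempty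
  · obtain ⟨v, hv, hvd⟩ := hH _ hl
    refine ⟨.inl v, hv, ?_⟩
    rwa [neighborSet_sum_inl, ← image_inter_preimage, ncard_image_of_injective _ Sum.inl_injective]
  · obtain ⟨x | x, hx⟩ := hs
    · exact absurd ⟨x, hx⟩ hl
    obtain ⟨w, hw, hwd⟩ := hG (Sum.inr ⁻¹' s) ⟨x, hx⟩
    refine ⟨.inr w, hw, ?_⟩
    rwa [neighborSet_sum_inr, ← image_inter_preimage, ncard_image_of_injective _ Sum.inr_injective]

lemma Degenerate.comap [Finite V] {π : X → V} (hH : Degenerate d H) (hS : H.IsIndepSet S)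
    (hSdeg : ∀ v ∈ S, (H.neighborSet v).ncard ≤ d)
    (hπ : ∀ x y, π x = π y → π x ∉ S → x = y) : Degenerate d (H.comap π) := by
  intro s hs
  by_cases hSs : ∃ x ∈ s, π x ∈ S
  · obtain ⟨x, hx, hxS⟩ := hSs
    refine ⟨x, hx, (ncard_le_ncard_of_injOn π (fun y hy => hy.1) ?_).trans (hSdeg _ hxS)⟩
    intro y hy z _ hyz
    exact hπ y z hyz fun hyS => hS hxS hyS (H.ne_of_adj hy.1) hy.1
  · push Not at hSs
    obtain ⟨_, ⟨x, hx, rfl⟩, hv⟩ := hH (π '' s) (hs.image π)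
    refine ⟨x, hx, (ncard_le_ncard_of_injOn (t := H.neighborSet (π x) ∩ π '' s) π
      (fun y hy => ⟨hy.1, mem_image_of_mem π hy.2⟩) ?_).trans hv⟩
    intro y hy z _ hyz
    exact hπ y z hyz (hSs y hy.2)

def blowupProj (S : Set V) (k : ℕ) : V ⊕ (S × Fin k) → V := Sum.elim id fun p => p.1

open Classical in
noncomputable def blowupSection (σ : S → Fin k) (v : V) : V ⊕ (S × Fin k) :=
  if hv : v ∈ S then .inr (⟨v, hv⟩, σ ⟨v, hv⟩) else .inl v

lemma leftInverse_blowupProj_blowupSection (σ : S → Fin k) :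
    LeftInverse (blowupProj S k) (blowupSection σ) := by
  intro v
  unfold blowupSection
  split_ifs <;> rfl

def SimpleGraph.Copy.comapOfLeftInverse {p : X → V} {e : V → X} (h : LeftInverse p e) :
    Copy H (H.comap p) :=
  ⟨⟨e, fun {u v} huv => by simpa [h u, h v] using huv⟩, h.injective⟩

/-- `H` with every vertex of `S` duplicated `k` more times, plus `k` isolated vertices. -/
def paddedBlowup (H : SimpleGraph V) (S : Set V) (k : ℕ) :
    SimpleGraph ((V ⊕ (S × Fin k)) ⊕ Fin k) :=
  H.comap (blowupProj S k) ⊕g ⊥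

noncomputable def blowupCopy (σ : S → Fin k) : Copy H (paddedBlowup H S k) :=
  Embedding.sumInl.toCopy.comp (Copy.comapOfLeftInverse (leftInverse_blowupProj_blowupSection σ))

lemma blowupCopy_apply (σ : S → Fin k) (v : V) :
    blowupCopy (H := H) σ v = .inl (blowupSection σ v) :=
  rfl

lemma Degenerate.paddedBlowup [Finite V] (hH : Degenerate d H) (hS : H.IsIndepSet S)
    (hSdeg : ∀ v ∈ S, (H.neighborSet v).ncard ≤ d) : Degenerate d (paddedBlowup H S k) := by
  refine (hH.comap hS hSdeg fun x y hxy hx => ?_).sum (degenerate_bot d)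
  rcases x with a | p <;> rcases y with b | q
  · simpa [blowupProj] using hxy
  · exact absurd (hxy ▸ q.1.2) hx
  · exact absurd p.1.2 hx
  · exact absurd p.1.2 hx

lemma card_paddedBlowup_verts [Finite V] (S : Set V) (k : ℕ) :
    Nat.card ((V ⊕ (S × Fin k)) ⊕ Fin k) = Nat.card V + S.ncard * k + k := by
  simp [Nat.card_sum, Nat.card_prod]

lemma pow_ncard_le_subCount_paddedBlowup [Finite V] (H : SimpleGraph V) (S : Set V) (k : ℕ) :
    k ^ S.ncard ≤ subCount H (paddedBlowup H S k) := by
  have := le_subCount_of_injective (φ := fun σ : S → Fin k => blowupCopy (H := H) σ) ?_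
  · simpa [Nat.card_fun] using this
  intro σ τ h
  have hστ := Copy.eq_of_toSubgraph_eq h fun a a' haa' => by
    rw [blowupCopy_apply, blowupCopy_apply] at haa'
    rw [← leftInverse_blowupProj_blowupSection σ a, ← leftInverse_blowupProj_blowupSection τ a',
      Sum.inl_injective haa']
  funext u
  simpa [blowupCopy_apply, blowupSection, u.2] using congrArg (· u) hστ

end Blowup

lemma inv_pow_mul_pow_le (a b m : ℕ) (hm : 1 ≤ m) :
    ((a + b + 1 : ℝ) ^ b)⁻¹ * ((a + b * m + m : ℕ) : ℝ) ^ b ≤ (m : ℝ) ^ b := by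
  rw [inv_mul_le_iff₀ (by positivity), ← mul_pow]
  gcongr
  have : (1 : ℝ) ≤ m := by exact_mod_cast hm
  push_cast
  nlinarith

/-- Let `d ≥ 0`, `D_d` the class of `d`-degenerate graphs, and `H` a `d`-degenerate graph.
There are positive reals `c₁, c₂` with `ex(H, D_d, n) ≤ c₂ · n^{α_d(H)}` for all `n`
(i.e. every `n`-vertex `d`-degenerate graph has at most `c₂ · n^{α_d(H)}` `H`-subgraphs)
and `ex(H, D_d, n) ≥ c₁ · n^{α_d(H)}` for infinitely many `n`. -/
theorem stmt18 (d : ℕ) {V : Type} [Fintype V] (H : SimpleGraph V)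
    (hH : Degenerate d H) :
    ∃ c₁ c₂ : ℝ, 0 < c₁ ∧ 0 < c₂ ∧
      (∀ (W : Type) [Fintype W] (G : SimpleGraph W), Degenerate d G →
          (subCount H G : ℝ) ≤ c₂ * (Nat.card W : ℝ) ^ (alphaD d H)) ∧
      {n : ℕ | ∃ (W : Type) (_ : Fintype W) (G : SimpleGraph W),
          Degenerate d G ∧ Nat.card W = n ∧
          c₁ * (n : ℝ) ^ (alphaD d H) ≤ (subCount H G : ℝ)}.Infinite := by
  obtain ⟨S, hS, hSdeg, hSα⟩ := exists_ncard_eq_alphaD d H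
  set α := alphaD d H
  set h := Nat.card V
  have hpatterns : 0 < Nat.card (V → V → Prop) := Nat.card_pos
  refine ⟨((h + α + 1 : ℝ) ^ α)⁻¹, (Nat.card (V → V → Prop) * (d + 1) ^ (h * h) : ℕ),
    by positivity, by positivity, fun W _ G hG => ?_, ?_⟩
  · have := (subCount_le_card_copy H G).trans hG.card_copy_le
    calc (subCount H G : ℝ)
        ≤ (Nat.card (V → V → Prop) * (Nat.card W ^ α * (d + 1) ^ (h * h)) : ℕ) := by
          exact_mod_cast this
      _ = _ := by push_cast; ring
  refine Set.infinite_of_injective_forall_mem (f := fun k => h + α * (k + 1) + (k + 1))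
    (StrictMono.injective fun a b hab =>
      Nat.add_lt_add_of_le_of_lt (by gcongr) (by omega)) fun k => ?_
  refine ⟨_, Fintype.ofFinite _, paddedBlowup H S (k + 1), hH.paddedBlowup hS hSdeg,
    by rw [card_paddedBlowup_verts, hSα], ?_⟩
  calc _ ≤ ((k + 1 : ℕ) : ℝ) ^ α := inv_pow_mul_pow_le h α (k + 1) (by omega)
    _ ≤ subCount H (paddedBlowup H S (k + 1)) := by
      exact_mod_cast hSα ▸ pow_ncard_le_subCount_paddedBlowup H S (k + 1)
end
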